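/- arXiv:2309.10928 — 5 statements merged into one kernel-verified Lean document; each statement's English description precedes it below -/
import Mathlib

section
/- For any finite simple graph G on n vertices with a fixed linear ordering of its edges, the chromatic polynomial satisfies χ_G(x) = x^n · F_G(-1/x), where F_G(x) = Σ_{F broken-circuit-free} x^{|F|} is the generating function of broken-circuit-free edge sets of G. -/
/-!
Split the sets `A ⊆ E` of the alternating sum defining `χ_G` into the broken-circuit-free ones
and the rest. On the rest, toggling the least edge `e` that tops a broken circuit contained in
`A` is a sign-reversing involution: `e` closes a cycle in `A \ {e}`, so the number of components
is unchanged, and the broken circuits topped by edges below `e` are unaffected, so `e` stays the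
least such edge. A broken-circuit-free set `F` is a forest, so `κ(F) = n - |F|` and its term is
`(-1)^|F| x^(n - |F|) = x^n (-1/x)^|F|`.
-/

open Finset

attribute [local instance] Classical.propDecidable

variable {V : Type} [Fintype V] [DecidableEq V]

/-- The chromatic polynomial: `χ_G(x) = Σ_{A ⊆ E} (-1)^{|A|} x^{κ(A)}`. -/
noncomputable def chromaticPoly (G : SimpleGraph V) (x : ℝ) : ℝ :=
  ∑ A ∈ G.edgeFinset.powerset,
    (-1 : ℝ) ^ A.card *
      x ^ Nat.card (SimpleGraph.fromEdgeSet (↑A : Set (Sym2 V))).ConnectedComponent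

/-- `C` is the edge set of a cycle of `G`. -/
def IsCircuit (G : SimpleGraph V) (C : Finset (Sym2 V)) : Prop :=
  ∃ (v : V) (w : G.Walk v v), w.IsCycle ∧ C = w.edges.toFinset

/-- `B` is a broken circuit of `G` with respect to the edge ordering `ord`:
the edge set of a cycle with its largest edge removed. -/
def IsBrokenCircuit (G : SimpleGraph V) (ord : Sym2 V → ℕ) (B : Finset (Sym2 V)) : Prop :=
  ∃ C, IsCircuit G C ∧ ∃ e ∈ C, (∀ f ∈ C, ord f ≤ ord e) ∧ B = C.erase e

/-- `F` is a broken-circuit-free set of edges of `G`. -/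
def IsBCF (G : SimpleGraph V) (ord : Sym2 V → ℕ) (F : Finset (Sym2 V)) : Prop :=
  F ⊆ G.edgeFinset ∧ ∀ B, IsBrokenCircuit G ord B → ¬ B ⊆ F

/-- `F_G(x) = Σ_{F BCF} x^{|F|}`, the generating function of broken-circuit-free sets. -/
noncomputable def bcfSum (G : SimpleGraph V) (ord : Sym2 V → ℕ) (x : ℝ) : ℝ :=
  ∑ F ∈ G.edgeFinset.powerset.filter (IsBCF G ord), x ^ F.card

open SimpleGraph

section ConnectedComponents

variable {W : Type*} {G : SimpleGraph W} {u v x y : W}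

lemma SimpleGraph.reachable_sup_edge_iff :
    (G ⊔ edge u v).Reachable x y ↔ G.Reachable x y ∨
      (G.Reachable x u ∧ G.Reachable v y) ∨ (G.Reachable x v ∧ G.Reachable u y) := by
  constructor
  · rintro ⟨p⟩
    induction p with
    | nil => exact .inl .rfl
    | cons h _ ih =>
      rw [sup_adj, edge_adj] at h
      rcases h with h | ⟨⟨rfl, rfl⟩ | ⟨rfl, rfl⟩, -⟩
      · rcases ih with h' | ⟨h₁, h₂⟩ | ⟨h₁, h₂⟩
        · exact .inl (h.reachable.trans h')
        · exact .inr (.inl ⟨h.reachable.trans h₁, h₂⟩)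
        · exact .inr (.inr ⟨h.reachable.trans h₁, h₂⟩)
      · rcases ih with h' | ⟨-, h₂⟩ | ⟨-, h₂⟩
        · exact .inr (.inl ⟨.rfl, h'⟩)
        · exact .inr (.inl ⟨.rfl, h₂⟩)
        · exact .inl h₂
      · rcases ih with h' | ⟨-, h₂⟩ | ⟨-, h₂⟩
        · exact .inr (.inr ⟨.rfl, h'⟩)
        · exact .inl h₂
        · exact .inr (.inr ⟨.rfl, h₂⟩)
  · have hle : G ≤ G ⊔ edge u v := le_sup_left
    have huv : (G ⊔ edge u v).Reachable u v := by
      by_cases h : u = v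
      · exact h ▸ .rfl
      · exact Adj.reachable (by simp [edge_adj, h])
    rintro (h | ⟨h₁, h₂⟩ | ⟨h₁, h₂⟩)
    · exact h.mono hle
    · exact (h₁.mono hle).trans (huv.trans (h₂.mono hle))
    · exact (h₁.mono hle).trans (huv.symm.trans (h₂.mono hle))

lemma SimpleGraph.card_connectedComponent_sup_edge_of_reachable (h : G.Reachable u v) :
    Nat.card (G ⊔ edge u v).ConnectedComponent = Nat.card G.ConnectedComponent :=
  Nat.card_congr <| Quot.congrRight fun a b => by
    rw [reachable_sup_edge_iff]
    refine ⟨?_, .inl⟩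
    rintro (h' | ⟨h₁, h₂⟩ | ⟨h₁, h₂⟩)
    exacts [h', h₁.trans (h.trans h₂), h₁.trans (h.symm.trans h₂)]

/-- Components of `G` map bijectively onto those of `G ⊔ edge u v` once the component of `u`,
the only one merged with another, is left out. -/
lemma SimpleGraph.card_connectedComponent_sup_edge_add_one [Finite W] (h : ¬ G.Reachable u v) :
    Nat.card (G ⊔ edge u v).ConnectedComponent + 1 = Nat.card G.ConnectedComponent := by
  let φ : G.ConnectedComponent → (G ⊔ edge u v).ConnectedComponent :=
    ConnectedComponent.map (Hom.ofLE le_sup_left)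
  have hφ : ∀ x, φ (G.connectedComponentMk x) = (G ⊔ edge u v).connectedComponentMk x :=
    fun _ => rfl
  have hbij : Function.Bijective fun c : {c // c ≠ G.connectedComponentMk u} => φ c := by
    constructor
    · rintro ⟨c, hc⟩ ⟨c', hc'⟩ hcc'
      induction c using ConnectedComponent.ind
      induction c' using ConnectedComponent.ind
      simp only [hφ, ConnectedComponent.eq, reachable_sup_edge_iff, ne_eq] at hcc' hc hc'
      rcases hcc' with h' | ⟨h₁, -⟩ | ⟨-, h₂⟩
      · exact Subtype.ext (ConnectedComponent.sound h')
      · exact absurd h₁ hc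
      · exact absurd h₂.symm hc'
    · intro d
      obtain ⟨c, rfl⟩ := ConnectedComponent.surjective_map_ofLE le_sup_left d
      by_cases hc : c = G.connectedComponentMk u
      · have hv : G.connectedComponentMk v ≠ G.connectedComponentMk u :=
          fun h' => h (ConnectedComponent.exact h').symm
        refine ⟨⟨_, hv⟩, ?_⟩
        simp only [hc, hφ]
        exact ConnectedComponent.sound (reachable_sup_edge_iff.mpr (.inr (.inr ⟨.rfl, .rfl⟩)))
      · exact ⟨⟨c, hc⟩, rfl⟩
  rw [← Nat.card_congr (Equiv.ofBijective _ hbij), ← Finite.card_option,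
    Nat.card_congr (Equiv.optionSubtypeNe _)]

lemma SimpleGraph.isEmpty_of_card_connectedComponent_eq_zero [Finite W]
    (h : Nat.card G.ConnectedComponent = 0) : IsEmpty W :=
  ⟨fun v => (Finite.card_pos_iff.mpr ⟨G.connectedComponentMk v⟩).ne' h⟩

lemma SimpleGraph.card_connectedComponent_bot :
    Nat.card (⊥ : SimpleGraph W).ConnectedComponent = Nat.card W :=
  Nat.card_congr <| .symm <| .ofBijective _
    ⟨fun _ _ h => reachable_bot.mp (ConnectedComponent.exact h), Quot.mk_surjective⟩

lemma SimpleGraph.fromEdgeSet_insert (s : Set (Sym2 W)) (u v : W) :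
    fromEdgeSet (insert s(u, v) s) = fromEdgeSet s ⊔ edge u v := by
  rw [Set.insert_eq, fromEdgeSet_union, sup_comm, edge]

lemma SimpleGraph.card_connectedComponent_fromEdgeSet_add_card [Fintype W]
    {A : Finset (Sym2 W)} (hdiag : ∀ e ∈ A, ¬ e.IsDiag)
    (hA : (fromEdgeSet (A : Set (Sym2 W))).IsAcyclic) :
    Nat.card (fromEdgeSet (A : Set (Sym2 W))).ConnectedComponent + A.card = Fintype.card W := by
  induction A using Finset.induction_on with
  | empty =>
    rw [Finset.coe_empty, fromEdgeSet_empty, Finset.card_empty, add_zero,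
      card_connectedComponent_bot, Nat.card_eq_fintype_card]
  | insert e A he ih =>
    induction e using Sym2.ind with | _ a b => ?_
    have hab : a ≠ b := fun h => hdiag _ (Finset.mem_insert_self _ _) (Sym2.mk_isDiag_iff.mpr h)
    rw [Finset.coe_insert, fromEdgeSet_insert, isAcyclic_sup_fromEdgeSet_iff] at hA
    have hnr : ¬ (fromEdgeSet (A : Set (Sym2 W))).Reachable a b :=
      fun h => (hA.2 h).elim hab fun hadj => he hadj.1
    rw [Finset.card_insert_of_notMem he, Finset.coe_insert, fromEdgeSet_insert, ← add_assoc,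
      add_right_comm, card_connectedComponent_sup_edge_add_one hnr,
      ih (fun e he => hdiag e (Finset.mem_insert_of_mem he)) hA.1]

lemma SimpleGraph.Walk.IsCycle.reachable_fromEdgeSet_erase [DecidableEq W] {p : G.Walk v v}
    (hp : p.IsCycle) (huv : s(x, y) ∈ p.edges) :
    (fromEdgeSet (p.edges.toFinset.erase s(x, y) : Set (Sym2 W))).Reachable x y := by
  have hK : ∀ f ∈ p.edges, f ∈ (fromEdgeSet (p.edges.toFinset : Set (Sym2 W))).edgeSet :=
    fun f hf => by
      simpa [hf] using G.not_isDiag_of_mem_edgeSet (p.edges_subset_edgeSet hf)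
  have := (adj_and_reachable_delete_edges_iff_exists_cycle.mpr
    ⟨v, p.transfer _ hK, hp.transfer hK, by rwa [Walk.edges_transfer]⟩).2
  rwa [deleteEdges, ← fromEdgeSet_sdiff, ← Finset.coe_singleton, ← Finset.coe_sdiff,
    ← Finset.erase_eq] at this

end ConnectedComponents

section SymmDiff

variable {α : Type*} [DecidableEq α] {A : Finset α} {e : α}

lemma Finset.symmDiff_singleton_of_mem (h : e ∈ A) : symmDiff A {e} = A.erase e := by
  ext; simp only [mem_symmDiff, mem_singleton, mem_erase]; grind

lemma Finset.symmDiff_singleton_of_notMem (h : e ∉ A) : symmDiff A {e} = insert e A := by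
  ext; simp only [mem_symmDiff, mem_singleton, mem_insert]; grind

lemma Finset.neg_one_pow_card_symmDiff_singleton {R : Type*} [Ring R] :
    (-1 : R) ^ #(symmDiff A {e}) = -(-1) ^ #A := by
  by_cases h : e ∈ A
  · rw [symmDiff_singleton_of_mem h, ← card_erase_add_one h, pow_succ, mul_neg_one, neg_neg]
  · rw [symmDiff_singleton_of_notMem h, card_insert_of_notMem h, pow_succ, mul_neg_one]

end SymmDiff

section BrokenCircuits

variable {G : SimpleGraph V} {ord : Sym2 V → ℕ} {A B C F : Finset (Sym2 V)} {e : Sym2 V}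

lemma IsCircuit.subset_edgeFinset (hC : IsCircuit G C) : C ⊆ G.edgeFinset := by
  obtain ⟨v, p, -, rfl⟩ := hC
  intro f hf
  exact mem_edgeFinset.mpr (p.edges_subset_edgeSet (List.mem_toFinset.mp hf))

lemma IsBCF.isAcyclic (hF : IsBCF G ord F) : (fromEdgeSet (F : Set (Sym2 V))).IsAcyclic := by
  intro v p hp
  have hle : fromEdgeSet (F : Set (Sym2 V)) ≤ G :=
    (fromEdgeSet_le G).mpr fun e he => mem_edgeFinset.mp (hF.1 he.1)
  have hCF : p.edges.toFinset ⊆ F := fun f hf => by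
    have := p.edges_subset_edgeSet (List.mem_toFinset.mp hf)
    rw [edgeSet_fromEdgeSet] at this
    exact this.1
  have hC : IsCircuit G p.edges.toFinset :=
    ⟨v, p.mapLe hle, hp.mapLe hle, by rw [Walk.edges_mapLe_eq_edges]⟩
  obtain ⟨e, he, hmax⟩ := exists_max_image p.edges.toFinset ord
    (List.toFinset_nonempty_iff _ |>.mpr (mt Walk.edges_eq_nil.mp hp.not_nil))
  exact hF.2 _ ⟨_, hC, e, he, hmax, rfl⟩ ((erase_subset _ _).trans hCF)

lemma IsBCF.card_connectedComponent_add_card (hF : IsBCF G ord F) :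
    Nat.card (fromEdgeSet (F : Set (Sym2 V))).ConnectedComponent + #F = Fintype.card V :=
  card_connectedComponent_fromEdgeSet_add_card
    (fun _ he => G.not_isDiag_of_mem_edgeSet (mem_edgeFinset.mp (hF.1 he))) hF.isAcyclic

variable (G ord) in
noncomputable def brokenCircuitTops (A : Finset (Sym2 V)) : Finset (Sym2 V) :=
  {e ∈ G.edgeFinset |
    ∃ C, IsCircuit G C ∧ e ∈ C ∧ (∀ f ∈ C, ord f ≤ ord e) ∧ C.erase e ⊆ A}

lemma not_isBCF_iff (hA : A ⊆ G.edgeFinset) :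
    ¬ IsBCF G ord A ↔ (brokenCircuitTops G ord A).Nonempty := by
  simp only [IsBCF, hA, true_and, not_forall, not_not, brokenCircuitTops, Finset.Nonempty,
    mem_filter, IsBrokenCircuit]
  constructor
  · rintro ⟨_, ⟨C, hC, e, he, hmax, rfl⟩, hCA⟩
    exact ⟨e, hC.subset_edgeFinset he, C, hC, he, hmax, hCA⟩
  · rintro ⟨e, -, C, hC, he, hmax, hCA⟩
    exact ⟨_, ⟨C, hC, e, he, hmax, rfl⟩, hCA⟩

lemma mem_brokenCircuitTops_congr (hord : Set.InjOn ord G.edgeSet)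
    (hAB : ∀ f, ord f < ord e → (f ∈ A ↔ f ∈ B)) :
    e ∈ brokenCircuitTops G ord A ↔ e ∈ brokenCircuitTops G ord B := by
  have key : ∀ C, IsCircuit G C → e ∈ C → (∀ f ∈ C, ord f ≤ ord e) →
      (C.erase e ⊆ A ↔ C.erase e ⊆ B) := by
    intro C hC he hmax
    have hlt : ∀ f ∈ C.erase e, ord f < ord e := fun f hf =>
      (hmax f (mem_of_mem_erase hf)).lt_of_ne fun h => ne_of_mem_erase hf <|
        hord (mem_edgeFinset.mp (hC.subset_edgeFinset (mem_of_mem_erase hf)))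
          (mem_edgeFinset.mp (hC.subset_edgeFinset he)) h
    exact ⟨fun h f hf => (hAB f (hlt f hf)).mp (h hf),
      fun h f hf => (hAB f (hlt f hf)).mpr (h hf)⟩
  simp only [brokenCircuitTops, mem_filter]
  refine and_congr_right fun _ => exists_congr fun C => ?_
  exact ⟨fun ⟨hC, he, hmax, h⟩ => ⟨hC, he, hmax, (key C hC he hmax).mp h⟩,
    fun ⟨hC, he, hmax, h⟩ => ⟨hC, he, hmax, (key C hC he hmax).mpr h⟩⟩

noncomputable def firstBrokenCircuitTop (h : (brokenCircuitTops G ord A).Nonempty) : Sym2 V :=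
  (exists_min_image _ ord h).choose

lemma firstBrokenCircuitTop_spec (h : (brokenCircuitTops G ord A).Nonempty) :
    firstBrokenCircuitTop h ∈ brokenCircuitTops G ord A ∧
      ∀ f ∈ brokenCircuitTops G ord A, ord (firstBrokenCircuitTop h) ≤ ord f :=
  (exists_min_image _ ord h).choose_spec

lemma firstBrokenCircuitTop_eq (hord : Set.InjOn ord G.edgeSet)
    (h : (brokenCircuitTops G ord A).Nonempty) (he : e ∈ brokenCircuitTops G ord A)
    (hmin : ∀ f ∈ brokenCircuitTops G ord A, ord e ≤ ord f) :
    firstBrokenCircuitTop h = e :=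
  have hspec := firstBrokenCircuitTop_spec h
  hord (mem_edgeFinset.mp (mem_filter.mp hspec.1).1) (mem_edgeFinset.mp (mem_filter.mp he).1)
    ((hspec.2 e he).antisymm (hmin _ hspec.1))

/-- Toggling `e` affects no broken circuit topped by an edge below `e`. -/
lemma firstBrokenCircuitTop_symmDiff (hord : Set.InjOn ord G.edgeSet)
    (h : (brokenCircuitTops G ord A).Nonempty) :
    ∃ h' : (brokenCircuitTops G ord (symmDiff A {firstBrokenCircuitTop h})).Nonempty,
      firstBrokenCircuitTop h' = firstBrokenCircuitTop h := by
  set e := firstBrokenCircuitTop h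
  obtain ⟨he, hmin⟩ := firstBrokenCircuitTop_spec h
  have hagree : ∀ f, ord f ≤ ord e →
      (f ∈ brokenCircuitTops G ord A ↔ f ∈ brokenCircuitTops G ord (symmDiff A {e})) :=
    fun f hf => mem_brokenCircuitTops_congr hord fun g hg => by
      have : g ≠ e := by rintro rfl; omega
      simp [mem_symmDiff, this]
  have he' := (hagree e le_rfl).mp he
  refine ⟨⟨e, he'⟩, firstBrokenCircuitTop_eq hord _ he' fun f hf => ?_⟩
  by_contra! hlt
  exact (hmin f ((hagree f hlt.le).mpr hf)).not_gt hlt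

/-- The top `s(a, b)` closes a cycle through edges of `A` other than itself, so adding or
removing it does not change which vertices are connected. -/
lemma card_connectedComponent_symmDiff_of_mem_brokenCircuitTops
    (he : e ∈ brokenCircuitTops G ord A) :
    Nat.card (fromEdgeSet (↑(symmDiff A {e}) : Set (Sym2 V))).ConnectedComponent =
      Nat.card (fromEdgeSet (A : Set (Sym2 V))).ConnectedComponent := by
  obtain ⟨-, C, ⟨v, p, hp, rfl⟩, heC, -, hCA⟩ := mem_filter.mp he
  induction e using Sym2.ind with | _ a b => ?_
  have hr : (fromEdgeSet (A.erase s(a, b) : Set (Sym2 V))).Reachable a b :=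
    (hp.reachable_fromEdgeSet_erase (List.mem_toFinset.mp heC)).mono <| fromEdgeSet_mono <|
      coe_subset.mpr fun f hf => mem_erase.mpr ⟨ne_of_mem_erase hf, hCA hf⟩
  have hins : Nat.card (fromEdgeSet (↑(insert s(a, b) A) : Set (Sym2 V))).ConnectedComponent =
      Nat.card (fromEdgeSet (A.erase s(a, b) : Set (Sym2 V))).ConnectedComponent := by
    rw [coe_insert, ← Set.insert_sdiff_singleton, ← coe_singleton, ← coe_sdiff, ← erase_eq,
      fromEdgeSet_insert, card_connectedComponent_sup_edge_of_reachable hr]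
  by_cases hA : s(a, b) ∈ A
  · rw [symmDiff_singleton_of_mem hA, ← hins, insert_eq_of_mem hA]
  · rw [symmDiff_singleton_of_notMem hA, hins, erase_eq_of_notMem hA]

lemma sum_filter_not_isBCF_eq_zero (hord : Set.InjOn ord G.edgeSet) (x : ℝ) :
    ∑ A ∈ G.edgeFinset.powerset.filter (fun A => ¬ IsBCF G ord A),
      (-1 : ℝ) ^ #A * x ^ Nat.card (fromEdgeSet (A : Set (Sym2 V))).ConnectedComponent = 0 := by
  have htops : ∀ A ∈ G.edgeFinset.powerset.filter (fun A => ¬ IsBCF G ord A),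
      (brokenCircuitTops G ord A).Nonempty := fun A hA => by
    rw [mem_filter, mem_powerset] at hA
    exact (not_isBCF_iff hA.1).mp hA.2
  refine sum_involution (fun A hA => symmDiff A {firstBrokenCircuitTop (htops A hA)})
    (fun A hA => ?_) (fun A hA _ => ?_) (fun A hA => ?_) (fun A hA => ?_)
  · rw [card_connectedComponent_symmDiff_of_mem_brokenCircuitTops
      (firstBrokenCircuitTop_spec _).1, neg_one_pow_card_symmDiff_singleton]
    ring
  · simp
  · obtain ⟨h', -⟩ := firstBrokenCircuitTop_symmDiff hord (htops A hA)
    have hA' := mem_powerset.mp (mem_filter.mp hA).1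
    have hsub := symmDiff_le_sup.trans (union_subset hA' (singleton_subset_iff.mpr
      (mem_filter.mp (firstBrokenCircuitTop_spec (htops A hA)).1).1))
    exact mem_filter.mpr ⟨mem_powerset.mpr hsub, (not_isBCF_iff hsub).mpr h'⟩
  · obtain ⟨h', he⟩ := firstBrokenCircuitTop_symmDiff hord (htops A hA)
    simp only [he, symmDiff_symmDiff_cancel_right]

end BrokenCircuits

lemma neg_one_pow_mul_pow_eq {K : Type*} [Field K] (x : K) {k m n : ℕ} (h : m + k = n)
    (hm : m = 0 → n = 0) : (-1) ^ k * x ^ m = x ^ n * (-1 / x) ^ k := by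
  rcases eq_or_ne x 0 with rfl | hx
  · rcases Nat.eq_zero_or_pos m with rfl | hm'
    · obtain rfl : k = 0 := by omega
      simp [hm rfl]
    · rw [zero_pow hm'.ne', zero_pow (by omega), zero_mul, mul_zero]
  · rw [← h, pow_add, div_pow]
    field_simp

/-- Whitney's theorem: `χ_G(x) = x^n F_G(-1/x)` for an `n`-vertex graph with a fixed
linear ordering of its edges. -/
theorem whitney (G : SimpleGraph V) (ord : Sym2 V → ℕ)
    (hord : Set.InjOn ord G.edgeSet) (x : ℝ) :
    chromaticPoly G x = x ^ Fintype.card V * bcfSum G ord (-1 / x) := by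
  rw [chromaticPoly, bcfSum, mul_sum, ← sum_filter_add_sum_filter_not _ (IsBCF G ord),
    sum_filter_not_isBCF_eq_zero hord, add_zero]
  refine sum_congr rfl fun F hF => neg_one_pow_mul_pow_eq x
    (mem_filter.mp hF).2.card_connectedComponent_add_card fun hκ =>
      Fintype.card_eq_zero_iff.mpr (isEmpty_of_card_connectedComponent_eq_zero hκ)
end

section
/- Let G = (V,E) be a finite simple graph of maximum degree at most Δ ≥ 1 and let v ∈ V. For any real α ≥ 1, the rooted tree generating function satisfies T_{G,v}(ln α/(αΔ)) ≤ α. -/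
open Finset

attribute [local instance] Classical.propDecidable

variable {V : Type} [Fintype V] [DecidableEq V]

/-- Vertex support of an edge set: the non-isolated vertices. -/
def edgeSupp (F : Finset (Sym2 V)) : Finset V :=
  Finset.univ.filter fun v => ∃ e ∈ F, v ∈ e

/-- `F` is (the edge set of) a subtree of `G`: a connected acyclic edge subset. -/
def IsSubtree (G : SimpleGraph V) (F : Finset (Sym2 V)) : Prop :=
  F ⊆ G.edgeFinset ∧ (SimpleGraph.fromEdgeSet (↑F : Set (Sym2 V))).IsAcyclic ∧
    ∀ a ∈ edgeSupp F, ∀ b ∈ edgeSupp F,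
      (SimpleGraph.fromEdgeSet (↑F : Set (Sym2 V))).Reachable a b

/-- The rooted tree generating function `T_{G,v}(x)`: the sum of `x^{|T|}` over all
subtrees `T` of `G` whose vertex set contains `v` (the empty tree contributes `1`). -/
noncomputable def treeSum (G : SimpleGraph V) (v : V) (x : ℝ) : ℝ :=
  ∑ F ∈ G.edgeFinset.powerset.filter
      (fun F => IsSubtree G F ∧ (F ≠ ∅ → v ∈ edgeSupp F)), x ^ F.card

/-!
Delete an edge `vu` at the root. A subtree through `v` either avoids `vu`, and is then a subtree
of `G - vu` through `v`, or it contains `vu`, and removing that bridge splits it into a subtree of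
`G - vu` through `v` and a subtree of `G - v` through `u`. Hence
`T_{G,v}(x) ≤ T_{G-vu,v}(x) (1 + x T_{G-v,u}(x))`, and induction on `G` gives
`T_{G,v}(x) ≤ c ^ deg v` as soon as `1 + x c^Δ ≤ c`. For `x = ln α / (αΔ)` the choice
`c = 1 + ln α / Δ` works, because `(1 + ln α / Δ)^Δ ≤ exp (ln α) = α`.
-/

namespace Finset

theorem sum_le_sum_of_injOn {ι κ N : Type*} [AddCommMonoid N] [Preorder N] [AddLeftMono N]
    {s : Finset ι} {t : Finset κ} (g : ι → κ) (hg : Set.MapsTo g s t) (hinj : Set.InjOn g s)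
    {f : κ → N} (hf : ∀ k ∈ t, 0 ≤ f k) : ∑ i ∈ s, f (g i) ≤ ∑ k ∈ t, f k := by
  rw [← sum_image hinj]
  exact sum_le_sum_of_subset_of_nonneg (image_subset_iff.2 hg) fun k hk _ => hf k hk

end Finset

open Finset SimpleGraph

namespace SimpleGraph

variable {W : Type*} {G : SimpleGraph W} {v u w : W}

theorem deleteEdges_lt_of_mem {s : Set (Sym2 W)} {e : Sym2 W} (hG : e ∈ G.edgeSet)
    (hs : e ∈ s) : G.deleteEdges s < G := by
  refine (deleteEdges_le s).lt_of_ne fun h => ?_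
  rw [← h, edgeSet_deleteEdges] at hG
  exact hG.2 hs

theorem degree_lt_degree [Fintype W] {H : SimpleGraph W} (hHG : H ≤ G) (hG : G.Adj v u)
    (hH : ¬ H.Adj v u) : H.degree v < G.degree v := by
  refine card_lt_card ((ssubset_iff_of_subset fun w hw => ?_).2 ⟨u, ?_, ?_⟩)
  · rw [mem_neighborFinset] at hw ⊢
    exact hHG hw
  · rwa [mem_neighborFinset]
  · rwa [mem_neighborFinset]

theorem fromEdgeSet_erase [DecidableEq W] (F : Finset (Sym2 W)) (e : Sym2 W) :
    fromEdgeSet (↑(F.erase e) : Set (Sym2 W)) =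
      (fromEdgeSet (F : Set (Sym2 W))).deleteEdges {e} := by
  rw [coe_erase, deleteEdges_fromEdgeSet]

theorem Walk.reachable_deleteEdges_or {a : W} (p : G.Walk a w)
    (ha : (G.deleteEdges {s(v, u)}).Reachable v a ∨ (G.deleteEdges {s(v, u)}).Reachable u a) :
    (G.deleteEdges {s(v, u)}).Reachable v w ∨ (G.deleteEdges {s(v, u)}).Reachable u w := by
  induction p with
  | nil => exact ha
  | @cons a b _ hab _ ih =>
    refine ih ?_
    by_cases he : s(a, b) = s(v, u)
    · rcases Sym2.eq_iff.1 he with ⟨-, rfl⟩ | ⟨-, rfl⟩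
      · exact Or.inr .rfl
      · exact Or.inl .rfl
    · have hab' : (G.deleteEdges {s(v, u)}).Adj a b := (deleteEdges_adj ..).2 ⟨hab, he⟩
      exact ha.imp (·.trans hab'.reachable) (·.trans hab'.reachable)

theorem Reachable.deleteEdges_or (h : G.Reachable v w) :
    (G.deleteEdges {s(v, u)}).Reachable v w ∨ (G.deleteEdges {s(v, u)}).Reachable u w :=
  h.elim fun p => p.reachable_deleteEdges_or (Or.inl .rfl)

theorem IsAcyclic.not_reachable_erase [DecidableEq W] {F : Finset (Sym2 W)}
    (hF : (fromEdgeSet (F : Set (Sym2 W))).IsAcyclic) (hvu : v ≠ u) (he : s(v, u) ∈ F) :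
    ¬ (fromEdgeSet (↑(F.erase s(v, u)) : Set (Sym2 W))).Reachable v u := by
  rw [fromEdgeSet_erase]
  exact isBridge_iff.1 <|
    isAcyclic_iff_forall_adj_isBridge.1 hF ((fromEdgeSet_adj _).2 ⟨he, hvu⟩)

end SimpleGraph

variable {E F : Finset (Sym2 V)} {G : SimpleGraph V} {v u r w : V} {x : ℝ}

lemma mem_edgeSupp : w ∈ edgeSupp F ↔ ∃ e ∈ F, w ∈ e := by
  simp [edgeSupp]

lemma mem_edgeSupp_of_reachable (hrw : r ≠ w)
    (h : (fromEdgeSet (F : Set (Sym2 V))).Reachable r w) : r ∈ edgeSupp F := by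
  obtain ⟨p⟩ := h
  have hadj := p.adj_snd (Walk.not_nil_of_ne hrw)
  rw [fromEdgeSet_adj] at hadj
  exact mem_edgeSupp.2 ⟨_, hadj.1, Sym2.mem_mk_left _ _⟩

noncomputable def componentEdges (E : Finset (Sym2 V)) (r : V) : Finset (Sym2 V) :=
  E.filter fun f => ∃ w ∈ f, (fromEdgeSet (E : Set (Sym2 V))).Reachable r w

lemma componentEdges_subset : componentEdges E r ⊆ E := filter_subset _ _

lemma reachable_of_mem_componentEdges {f : Sym2 V} (hf : f ∈ componentEdges E r) (hw : w ∈ f) :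
    (fromEdgeSet (E : Set (Sym2 V))).Reachable r w := by
  obtain ⟨hfE, w', hw', hrw'⟩ := mem_filter.1 hf
  rcases eq_or_ne w' w with rfl | hne
  · exact hrw'
  · refine hrw'.trans (Adj.reachable ?_)
    rw [fromEdgeSet_adj, ← (Sym2.mem_and_mem_iff hne).1 ⟨hw', hw⟩]
    exact ⟨hfE, hne⟩

lemma reachable_componentEdges (h : (fromEdgeSet (E : Set (Sym2 V))).Reachable r w) :
    (fromEdgeSet (↑(componentEdges E r) : Set (Sym2 V))).Reachable r w := by
  obtain ⟨p⟩ := h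
  refine ⟨p.transfer _ fun f hf => ?_⟩
  have hfE := p.edges_subset_edgeSet hf
  rw [edgeSet_fromEdgeSet] at hfE ⊢
  refine ⟨mem_coe.2 (mem_filter.2 ⟨hfE.1, ?_⟩), hfE.2⟩
  induction f using Sym2.ind with
  | _ a b =>
    exact ⟨a, Sym2.mem_mk_left a b, ⟨p.takeUntil a (p.fst_mem_support_of_mem_edges hf)⟩⟩

lemma mem_edgeSupp_componentEdges (h : (componentEdges E r).Nonempty) :
    r ∈ edgeSupp (componentEdges E r) := by
  obtain ⟨f, hf⟩ := h
  obtain ⟨-, w, hw, hrw⟩ := mem_filter.1 hf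
  rcases eq_or_ne r w with rfl | hne
  · exact mem_edgeSupp.2 ⟨f, hf, hw⟩
  · exact mem_edgeSupp_of_reachable hne (reachable_componentEdges hrw)

lemma disjoint_componentEdges (h : ¬ (fromEdgeSet (E : Set (Sym2 V))).Reachable r w) :
    Disjoint (componentEdges E r) (componentEdges E w) := by
  refine disjoint_left.2 fun f hr hw => ?_
  obtain ⟨a, ha, -⟩ := (mem_filter.1 hw).2
  exact h <|
    (reachable_of_mem_componentEdges hr ha).trans (reachable_of_mem_componentEdges hw ha).symm

noncomputable def rootedSubtrees (G : SimpleGraph V) (v : V) : Finset (Finset (Sym2 V)) :=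
  G.edgeFinset.powerset.filter (fun F => IsSubtree G F ∧ (F ≠ ∅ → v ∈ edgeSupp F))

lemma treeSum_eq_sum_rootedSubtrees (G : SimpleGraph V) (v : V) (x : ℝ) :
    treeSum G v x = ∑ F ∈ rootedSubtrees G v, x ^ #F := rfl

lemma mem_rootedSubtrees :
    F ∈ rootedSubtrees G v ↔ IsSubtree G F ∧ (F.Nonempty → v ∈ edgeSupp F) := by
  simp only [rootedSubtrees, mem_filter, mem_powerset, nonempty_iff_ne_empty]
  exact ⟨fun h => h.2, fun h => ⟨h.1.1, h⟩⟩

lemma IsSubtree.coe_subset_edgeSet (hF : IsSubtree G F) : (F : Set (Sym2 V)) ⊆ G.edgeSet :=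
  fun _ hf => mem_edgeFinset.1 (hF.1 hf)

lemma IsSubtree.of_coe_subset_edgeSet {G' : SimpleGraph V} (hF : IsSubtree G F)
    (h : (F : Set (Sym2 V)) ⊆ G'.edgeSet) : IsSubtree G' F :=
  ⟨fun _ hf => mem_edgeFinset.2 (h hf), hF.2⟩

lemma treeSum_nonneg (G : SimpleGraph V) (v : V) (hx : 0 ≤ x) : 0 ≤ treeSum G v x :=
  sum_nonneg fun _ _ => pow_nonneg hx _

lemma componentEdges_mem_rootedSubtrees
    (hG : (↑(componentEdges E r) : Set (Sym2 V)) ⊆ G.edgeSet)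
    (hE : (fromEdgeSet (E : Set (Sym2 V))).IsAcyclic) :
    componentEdges E r ∈ rootedSubtrees G r := by
  refine mem_rootedSubtrees.2 ⟨⟨fun _ hf => mem_edgeFinset.2 (hG hf),
    hE.anti (fromEdgeSet_mono (coe_subset.2 componentEdges_subset)), fun a ha b hb => ?_⟩,
    mem_edgeSupp_componentEdges⟩
  have hreach : ∀ c ∈ edgeSupp (componentEdges E r),
      (fromEdgeSet (↑(componentEdges E r) : Set (Sym2 V))).Reachable r c := fun c hc => by
    obtain ⟨f, hf, hcf⟩ := mem_edgeSupp.1 hc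
    exact reachable_componentEdges (reachable_of_mem_componentEdges hf hcf)
  exact (hreach a ha).symm.trans (hreach b hb)

lemma rootedSubtrees_eq_singleton_empty (h : ∀ w, ¬ G.Adj v w) : rootedSubtrees G v = {∅} := by
  refine eq_singleton_iff_unique_mem.2
    ⟨mem_rootedSubtrees.2 ⟨⟨empty_subset _, ?_, ?_⟩, ?_⟩, ?_⟩
  · simp
  · simp [edgeSupp]
  · simp
  · intro F hF
    by_contra hne
    obtain ⟨hF, hroot⟩ := mem_rootedSubtrees.1 hF
    obtain ⟨f, hf, hvf⟩ := mem_edgeSupp.1 (hroot (nonempty_iff_ne_empty.2 hne))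
    obtain ⟨w, rfl⟩ := Sym2.mem_iff_exists.1 hvf
    exact h w (hF.coe_subset_edgeSet hf)

lemma treeSum_eq_one (h : ∀ w, ¬ G.Adj v w) : treeSum G v x = 1 := by
  simp [treeSum_eq_sum_rootedSubtrees, rootedSubtrees_eq_singleton_empty h]

lemma erase_eq_componentEdges_union
    (hF : ∀ a ∈ edgeSupp F, ∀ b ∈ edgeSupp F,
      (fromEdgeSet (F : Set (Sym2 V))).Reachable a b)
    (he : s(v, u) ∈ F) :
    F.erase s(v, u) =
      componentEdges (F.erase s(v, u)) v ∪ componentEdges (F.erase s(v, u)) u := by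
  refine Subset.antisymm (fun f hf => ?_)
    (union_subset componentEdges_subset componentEdges_subset)
  have hv : v ∈ edgeSupp F := mem_edgeSupp.2 ⟨_, he, Sym2.mem_mk_left v u⟩
  have ha : f.out.1 ∈ edgeSupp F :=
    mem_edgeSupp.2 ⟨f, mem_of_mem_erase hf, Sym2.out_fst_mem f⟩
  have hreach := (hF v hv _ ha).deleteEdges_or (u := u)
  rw [← fromEdgeSet_erase] at hreach
  rcases hreach with h | h
  · exact mem_union_left _ (mem_filter.2 ⟨hf, _, Sym2.out_fst_mem f, h⟩)
  · exact mem_union_right _ (mem_filter.2 ⟨hf, _, Sym2.out_fst_mem f, h⟩)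

lemma IsSubtree.card_eq (hF : IsSubtree G F) (hvu : v ≠ u) (he : s(v, u) ∈ F) :
    #F = #(componentEdges (F.erase s(v, u)) v) + #(componentEdges (F.erase s(v, u)) u) + 1 := by
  rw [← card_union_of_disjoint (disjoint_componentEdges (hF.2.1.not_reachable_erase hvu he)),
    ← erase_eq_componentEdges_union hF.2.2 he, card_erase_add_one he]

lemma IsSubtree.isAcyclic_erase (hF : IsSubtree G F) (e : Sym2 V) :
    (fromEdgeSet (↑(F.erase e) : Set (Sym2 V))).IsAcyclic :=
  hF.2.1.anti (fromEdgeSet_mono (coe_subset.2 (erase_subset e F)))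

lemma IsSubtree.componentEdges_mem_deleteEdges (hF : IsSubtree G F) (e : Sym2 V) (r : V) :
    componentEdges (F.erase e) r ∈ rootedSubtrees (G.deleteEdges {e}) r := by
  refine componentEdges_mem_rootedSubtrees (fun f hf => ?_) (hF.isAcyclic_erase e)
  obtain ⟨hfe, hfF⟩ := mem_erase.1 (componentEdges_subset hf)
  rw [edgeSet_deleteEdges]
  exact ⟨hF.coe_subset_edgeSet hfF, hfe⟩

lemma IsSubtree.componentEdges_mem_deleteIncidenceSet (hF : IsSubtree G F) (hvu : v ≠ u)
    (he : s(v, u) ∈ F) :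
    componentEdges (F.erase s(v, u)) u ∈ rootedSubtrees (G.deleteIncidenceSet v) u := by
  refine componentEdges_mem_rootedSubtrees (fun f hf => ?_) (hF.isAcyclic_erase _)
  rw [edgeSet_deleteIncidenceSet]
  refine ⟨hF.coe_subset_edgeSet (mem_of_mem_erase (componentEdges_subset hf)),
    fun hvf => hF.2.1.not_reachable_erase hvu he ?_⟩
  exact (reachable_of_mem_componentEdges hf hvf.2).symm

lemma sum_rootedSubtrees_not_mem_le (G : SimpleGraph V) (v : V) (e : Sym2 V) (hx : 0 ≤ x) :
    ∑ F ∈ rootedSubtrees G v with e ∉ F, x ^ #F ≤ treeSum (G.deleteEdges {e}) v x := by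
  refine sum_le_sum_of_subset_of_nonneg (fun F hF => ?_) fun _ _ _ => pow_nonneg hx _
  obtain ⟨hFG, heF⟩ := mem_filter.1 hF
  obtain ⟨hF, hroot⟩ := mem_rootedSubtrees.1 hFG
  refine mem_rootedSubtrees.2 ⟨hF.of_coe_subset_edgeSet fun f hf => ?_, hroot⟩
  rw [edgeSet_deleteEdges]
  exact ⟨hF.coe_subset_edgeSet hf, fun hfe => heF (Set.mem_singleton_iff.1 hfe ▸ hf)⟩

lemma sum_rootedSubtrees_mem_le (huv : G.Adj v u) (hx : 0 ≤ x) :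
    ∑ F ∈ rootedSubtrees G v with s(v, u) ∈ F, x ^ #F ≤
      x * (treeSum (G.deleteEdges {s(v, u)}) v x * treeSum (G.deleteIncidenceSet v) u x) := by
  set e := s(v, u)
  set split : Finset (Sym2 V) → Finset (Sym2 V) × Finset (Sym2 V) :=
    fun F => (componentEdges (F.erase e) v, componentEdges (F.erase e) u)
  have hsub : ∀ F ∈ (rootedSubtrees G v).filter (e ∈ ·), IsSubtree G F ∧ e ∈ F :=
    fun F hF => ⟨(mem_rootedSubtrees.1 (mem_filter.1 hF).1).1, (mem_filter.1 hF).2⟩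
  have hmaps : Set.MapsTo split ↑((rootedSubtrees G v).filter (e ∈ ·))
      ↑(rootedSubtrees (G.deleteEdges {e}) v ×ˢ rootedSubtrees (G.deleteIncidenceSet v) u) :=
    fun F hF => by
      obtain ⟨hF, he⟩ := hsub F hF
      exact mem_product.2 ⟨hF.componentEdges_mem_deleteEdges e v,
        hF.componentEdges_mem_deleteIncidenceSet huv.ne he⟩
  have hinj : Set.InjOn split ↑((rootedSubtrees G v).filter (e ∈ ·)) :=
    fun F hF F' hF' h => by
    obtain ⟨hF, he⟩ := hsub F hF
    obtain ⟨hF', he'⟩ := hsub F' hF'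
    rw [← insert_erase he, ← insert_erase he', erase_eq_componentEdges_union hF.2.2 he,
      erase_eq_componentEdges_union hF'.2.2 he']
    exact congrArg₂ (fun A B => insert e (A ∪ B)) (congrArg Prod.fst h) (congrArg Prod.snd h)
  calc ∑ F ∈ rootedSubtrees G v with e ∈ F, x ^ #F
      = ∑ F ∈ rootedSubtrees G v with e ∈ F, x * (x ^ #(split F).1 * x ^ #(split F).2) :=
        sum_congr rfl fun F hF => by
          rw [(hsub F hF).1.card_eq huv.ne (hsub F hF).2]
          ring
    _ ≤ ∑ p ∈ rootedSubtrees (G.deleteEdges {e}) v ×ˢ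
          rootedSubtrees (G.deleteIncidenceSet v) u, x * (x ^ #p.1 * x ^ #p.2) :=
        sum_le_sum_of_injOn (f := fun p => x * (x ^ #p.1 * x ^ #p.2)) split hmaps hinj
          fun _ _ => by positivity
    _ = x * (treeSum (G.deleteEdges {e}) v x * treeSum (G.deleteIncidenceSet v) u x) := by
        rw [← mul_sum, sum_product, treeSum_eq_sum_rootedSubtrees, treeSum_eq_sum_rootedSubtrees,
          sum_mul_sum]

lemma treeSum_le_mul (huv : G.Adj v u) (hx : 0 ≤ x) :
    treeSum G v x ≤
      treeSum (G.deleteEdges {s(v, u)}) v x * (1 + x * treeSum (G.deleteIncidenceSet v) u x) := by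
  rw [treeSum_eq_sum_rootedSubtrees, ← sum_filter_not_add_sum_filter _ (s(v, u) ∈ ·)]
  calc _ ≤ treeSum (G.deleteEdges {s(v, u)}) v x +
          x * (treeSum (G.deleteEdges {s(v, u)}) v x * treeSum (G.deleteIncidenceSet v) u x) :=
        add_le_add (sum_rootedSubtrees_not_mem_le G v _ hx) (sum_rootedSubtrees_mem_le huv hx)
    _ = _ := by ring

lemma treeSum_le_pow_degree {Δ : ℕ} {c : ℝ} (hx : 0 ≤ x) (hc₁ : 1 ≤ c)
    (hc : 1 + x * c ^ Δ ≤ c) (G : SimpleGraph V) (hdeg : ∀ w, G.degree w ≤ Δ) (v : V) :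
    treeSum G v x ≤ c ^ G.degree v := by
  induction G using WellFoundedLT.induction generalizing v with
  | _ G ih =>
    by_cases hv : ∃ u, G.Adj v u
    · obtain ⟨u, huv⟩ := hv
      have hlt₁ : G.deleteEdges {s(v, u)} < G := deleteEdges_lt_of_mem huv rfl
      have hlt₂ : G.deleteIncidenceSet v < G :=
        deleteEdges_lt_of_mem (s := G.incidenceSet v) huv ⟨huv, Sym2.mem_mk_left v u⟩
      -- Stated for a variable `H`, so that `H.degree` carries the same instances as `ih`.
      have hdeg' : ∀ H ≤ G, ∀ w, H.degree w ≤ Δ :=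
        fun H hH w => (degree_le_of_le hH).trans (hdeg w)
      have ih₁ := ih _ hlt₁ (hdeg' _ hlt₁.le) v
      have ih₂ : treeSum (G.deleteIncidenceSet v) u x ≤ c ^ Δ :=
        (ih _ hlt₂ (hdeg' _ hlt₂.le) u).trans (pow_le_pow_right₀ hc₁ (hdeg' _ hlt₂.le u))
      calc treeSum G v x
          ≤ treeSum (G.deleteEdges {s(v, u)}) v x *
              (1 + x * treeSum (G.deleteIncidenceSet v) u x) := treeSum_le_mul huv hx
        _ ≤ treeSum (G.deleteEdges {s(v, u)}) v x * c := by
          gcongr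
          · exact treeSum_nonneg _ _ hx
          · exact (by gcongr : 1 + x * treeSum _ u x ≤ 1 + x * c ^ Δ).trans hc
        _ ≤ c ^ G.degree v := by
          refine (mul_le_mul_of_nonneg_right ih₁ (zero_le_one.trans hc₁)).trans ?_
          rw [← pow_succ]
          exact pow_le_pow_right₀ hc₁ (degree_lt_degree hlt₁.le huv (by simp))
    · push Not at hv
      rw [treeSum_eq_one hv]
      exact one_le_pow₀ hc₁

lemma one_add_log_div_pow_le {α : ℝ} (hα : 1 ≤ α) (n : ℕ) :
    (1 + Real.log α / n) ^ n ≤ α := by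
  have := Real.one_sub_div_pow_le_exp_neg (n := n) (t := -Real.log α)
    (by linarith [Real.log_nonneg hα, n.cast_nonneg (α := ℝ)])
  rwa [neg_div, sub_neg_eq_add, neg_neg, Real.exp_log (by linarith)] at this

theorem treeSum_le_general (G : SimpleGraph V) (Δ : ℕ)
    (hdeg : ∀ w : V, G.degree w ≤ Δ) (v : V) (α : ℝ) (hα : 1 ≤ α) :
    treeSum G v (Real.log α / (α * Δ)) ≤ α := by
  set c := 1 + Real.log α / Δ
  have hlog : 0 ≤ Real.log α := Real.log_nonneg hα
  have hx : 0 ≤ Real.log α / (α * Δ) := by positivity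
  have hc₁ : 1 ≤ c := le_add_of_nonneg_right (by positivity)
  have hcΔ : c ^ Δ ≤ α := one_add_log_div_pow_le hα Δ
  have hc : 1 + Real.log α / (α * Δ) * c ^ Δ ≤ c :=
    calc 1 + Real.log α / (α * Δ) * c ^ Δ ≤ 1 + Real.log α / (α * Δ) * α := by gcongr
      _ = 1 + Real.log α / Δ := by field_simp
  calc treeSum G v (Real.log α / (α * Δ)) ≤ c ^ G.degree v :=
        treeSum_le_pow_degree hx hc₁ hc G hdeg v
    _ ≤ c ^ Δ := pow_le_pow_right₀ hc₁ (hdeg v)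
    _ ≤ α := hcΔ

/-- For a graph of maximum degree at most `Δ ≥ 1` and any `α ≥ 1`,
`T_{G,v}(ln α / (α Δ)) ≤ α`. -/
theorem treeSum_le (G : SimpleGraph V) (Δ : ℕ) (hΔ : 1 ≤ Δ)
    (hdeg : ∀ w : V, G.degree w ≤ Δ) (v : V) (α : ℝ) (hα : 1 ≤ α) :
    treeSum G v (Real.log α / (α * Δ)) ≤ α :=
  treeSum_le_general G Δ hdeg v α hα
end

section
/- Let G = (V,E) be a finite simple graph of maximum degree at most Δ ≥ 1, let v₁, v₂ ∈ V be distinct, and suppose every path between v₁ and v₂ in G has more than g vertices. Then for any real α ∈ [1, e), T_{G,v₁,v₂}(ln α/(αΔ)) ≤ (ln α)^{g−1} · α·ln α/(Δ(1 − ln α)). -/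
/-!
Write `R_E(v)` for the sum over the subtrees of `E` through `v` (the one-vertex tree included)
and `P_E(v₁, v₂)` for the sum over those through `v₁ ≠ v₂`. Cutting a tree at an edge `vu`
leaves the branch at `u`, which avoids `v`, and the rest, so
`R_E(v) ≤ (1 + x R_{E-v}(u)) R_{E-vu}(v)` and by induction `R ≤ (1 + xα)^Δ ≤ α` for
`x = ln α / (αΔ)`, since `(1 + ln α / Δ)^Δ ≤ α`. Cutting a tree through `v₁` and `v₂` at the first
edge `v₁u` of its `v₁`–`v₂` path gives `P_E(v₁, v₂) ≤ ∑ᵤ x P_{E-v₁}(u, v₂) R_E(v₁)`: every step of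
the path costs at most `Δ x α = ln α`, and induction on the required path length gives the
geometric bound.
-/

open Finset

attribute [local instance] Classical.propDecidable

variable {V : Type} [Fintype V] [DecidableEq V]

/-- The double-rooted tree generating function `T_{G,v₁,v₂}(x)`: the sum of `x^{|T|}` over
all subtrees `T` of `G` whose vertex set contains both `v₁` and `v₂`. -/
noncomputable def treeSum2 (G : SimpleGraph V) (v₁ v₂ : V) (x : ℝ) : ℝ :=
  ∑ F ∈ G.edgeFinset.powerset.filter
      (fun F => IsSubtree G F ∧ v₁ ∈ edgeSupp F ∧ v₂ ∈ edgeSupp F), x ^ F.card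

open SimpleGraph

theorem filter_notMem_ssubset {W : Type*} [DecidableEq W] {E : Finset (Sym2 W)} {u v : W}
    (he : s(v, u) ∈ E) : E.filter (v ∉ ·) ⊂ E :=
  filter_ssubset.mpr ⟨_, he, not_not_intro (Sym2.mem_mk_left _ _)⟩

section Walks

variable {W : Type*} {s t : Set (Sym2 W)} {a b : W}

theorem mem_of_mem_edges_fromEdgeSet {p : (fromEdgeSet s).Walk a b} {d : Sym2 W}
    (hd : d ∈ p.edges) : d ∈ s := by
  have hd' := p.edges_subset_edgeSet hd
  rw [edgeSet_fromEdgeSet] at hd'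
  exact hd'.1

theorem reachable_fromEdgeSet_of_edges_subset (p : (fromEdgeSet s).Walk a b)
    (h : ∀ d ∈ p.edges, d ∈ t) : (fromEdgeSet t).Reachable a b :=
  ⟨p.transfer _ fun d hd => by
    rw [edgeSet_fromEdgeSet]
    exact ⟨h d hd, Sym2.mem_diagSet.not.mpr
      (not_isDiag_of_mem_edgeSet _ (p.edges_subset_edgeSet hd))⟩⟩

theorem reachable_fromEdgeSet_of_mem {d : Sym2 W} (hd : d ∈ s) (ha : a ∈ d) (hb : b ∈ d) :
    (fromEdgeSet s).Reachable a b := by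
  by_cases hab : a = b
  · exact hab ▸ .rfl
  · have hd' : d = s(a, b) := (Sym2.mem_and_mem_iff hab).mp ⟨ha, hb⟩
    exact ((fromEdgeSet_adj _).mpr ⟨hd' ▸ hd, hab⟩).reachable

theorem le_length_of_forall_isPath {H : SimpleGraph W} {g : ℕ}
    (h : ∀ p : H.Walk a b, p.IsPath → g < p.support.length) (p : H.Walk a b) : g ≤ p.length := by
  have := h _ p.bypass_isPath
  rw [Walk.length_support] at this
  have := p.length_bypass_le_length
  omega

variable [DecidableEq W] {F : Finset (Sym2 W)}

theorem not_reachable_erase_of_isAcyclic (hF : (fromEdgeSet (F : Set (Sym2 W))).IsAcyclic)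
    (he : s(a, b) ∈ F) (hab : a ≠ b) : ¬ (fromEdgeSet ↑(F.erase s(a, b))).Reachable a b := by
  have := isAcyclic_iff_forall_adj_isBridge.mp hF ((fromEdgeSet_adj _).mpr ⟨he, hab⟩)
  rwa [isBridge_iff, deleteEdges_fromEdgeSet, ← coe_singleton, ← coe_sdiff,
    ← erase_eq] at this

theorem reachable_erase_of_walk {u v : W} (p : (fromEdgeSet (F : Set (Sym2 W))).Walk a b)
    (hb : (fromEdgeSet ↑(F.erase s(u, v))).Reachable u b ∨
      (fromEdgeSet ↑(F.erase s(u, v))).Reachable v b) :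
    (fromEdgeSet ↑(F.erase s(u, v))).Reachable u a ∨
      (fromEdgeSet ↑(F.erase s(u, v))).Reachable v a := by
  induction p with
  | nil => exact hb
  | @cons a c _ hadj q ih =>
    by_cases hac : s(a, c) = s(u, v)
    · rcases Sym2.eq_iff.mp hac with ⟨rfl, -⟩ | ⟨rfl, -⟩
      · exact .inl .rfl
      · exact .inr .rfl
    · obtain ⟨hacF, hne⟩ := (fromEdgeSet_adj _).mp hadj
      have hadj' : (fromEdgeSet ↑(F.erase s(u, v))).Adj a c :=
        (fromEdgeSet_adj _).mpr ⟨mem_erase.mpr ⟨hac, hacF⟩, hne⟩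
      exact (ih hb).imp (·.trans hadj'.symm.reachable) (·.trans hadj'.symm.reachable)

theorem exists_reachable_erase_of_walk (p : (fromEdgeSet (F : Set (Sym2 W))).Walk a b)
    (hab : a ≠ b) : ∃ c, s(a, c) ∈ F ∧ (fromEdgeSet ↑(F.erase s(a, c))).Reachable c b := by
  obtain ⟨q, hq⟩ : ∃ q : (fromEdgeSet (F : Set (Sym2 W))).Walk a b, q.IsPath :=
    ⟨_, p.bypass_isPath⟩
  cases q with
  | nil => exact absurd rfl hab
  | @cons _ c _ hadj q =>
    have ha : a ∉ q.support := ((Walk.cons_isPath_iff _ _).mp hq).2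
    refine ⟨c, ((fromEdgeSet_adj _).mp hadj).1, reachable_fromEdgeSet_of_edges_subset q fun d hd =>
      mem_erase.mpr ⟨?_, mem_of_mem_edges_fromEdgeSet hd⟩⟩
    rintro rfl
    exact ha (q.fst_mem_support_of_mem_edges hd)

end Walks

section Branch

variable {W : Type*} [DecidableEq W] {F : Finset (Sym2 W)} {e d : Sym2 W} {u v w : W}

noncomputable def branch (F : Finset (Sym2 W)) (e : Sym2 W) (w : W) : Finset (Sym2 W) :=
  (F.erase e).filter fun d => ∀ a ∈ d, (fromEdgeSet ↑(F.erase e)).Reachable w a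

theorem mem_branch :
    d ∈ branch F e w ↔ d ∈ F.erase e ∧ ∀ a ∈ d, (fromEdgeSet ↑(F.erase e)).Reachable w a :=
  mem_filter

theorem branch_subset : branch F e w ⊆ F.erase e :=
  filter_subset _ _

theorem mem_branch_of_mem_edges {c : W} (p : (fromEdgeSet ↑(F.erase e)).Walk w c)
    (hd : d ∈ p.edges) : d ∈ branch F e w :=
  mem_branch.mpr ⟨mem_of_mem_edges_fromEdgeSet hd,
    fun a ha => ⟨p.takeUntil a (p.mem_support_of_mem_edges hd ha)⟩⟩

theorem reachable_branch_of_reachable {c : W} (h : (fromEdgeSet ↑(F.erase e)).Reachable w c) :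
    (fromEdgeSet ↑(branch F e w)).Reachable w c :=
  let ⟨p⟩ := h
  reachable_fromEdgeSet_of_edges_subset p fun _ hd => mem_branch_of_mem_edges p hd

theorem notMem_of_mem_branch (hF : (fromEdgeSet (F : Set (Sym2 W))).IsAcyclic)
    (he : s(v, u) ∈ F) (hvu : v ≠ u) (hd : d ∈ branch F s(v, u) u) : v ∉ d := fun hv =>
  not_reachable_erase_of_isAcyclic hF he hvu ((mem_branch.mp hd).2 v hv).symm

theorem disjoint_branch (hF : (fromEdgeSet (F : Set (Sym2 W))).IsAcyclic)
    (he : s(v, u) ∈ F) (hvu : v ≠ u) : Disjoint (branch F s(v, u) u) (branch F s(v, u) v) :=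
  disjoint_left.mpr fun d hdu hdv =>
    not_reachable_erase_of_isAcyclic hF he hvu <|
      ((mem_branch.mp hdv).2 _ (Sym2.out_fst_mem d)).trans
        ((mem_branch.mp hdu).2 _ (Sym2.out_fst_mem d)).symm

end Branch

theorem mem_edgeSupp_s3 {F : Finset (Sym2 V)} {v : V} : v ∈ edgeSupp F ↔ ∃ d ∈ F, v ∈ d := by
  simp [edgeSupp]

theorem mem_edgeSupp_of_mem_support {H : SimpleGraph V} {F : Finset (Sym2 V)} {a b c : V}
    {p : H.Walk a b} (hab : a ≠ b) (hp : ∀ d ∈ p.edges, d ∈ F) (hc : c ∈ p.support) :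
    c ∈ edgeSupp F :=
  let ⟨d, hd, hcd⟩ :=
    (Walk.mem_support_iff_exists_mem_edges_of_not_nil (Walk.not_nil_of_ne hab)).mp hc
  mem_edgeSupp_s3.mpr ⟨d, hp d hd, hcd⟩

section Subtree

variable {G : SimpleGraph V} {F : Finset (Sym2 V)} {e : Sym2 V} {u v w : V}

theorem isSubtree_empty : IsSubtree G ∅ :=
  ⟨empty_subset _, by simp [fromEdgeSet_empty], by simp [edgeSupp]⟩

theorem IsSubtree.ne_of_mem (hF : IsSubtree G F) (he : s(v, u) ∈ F) : v ≠ u :=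
  (G.mem_edgeSet.mp (G.mem_edgeFinset.mp (hF.1 he))).ne

theorem isSubtree_branch (hF : IsSubtree G F) : IsSubtree G (branch F e w) := by
  refine ⟨branch_subset.trans ((erase_subset _ _).trans hF.1),
    hF.2.1.anti (fromEdgeSet_mono (coe_subset.mpr
      (branch_subset.trans (erase_subset _ _)))), fun a ha b hb => ?_⟩
  have hreach : ∀ c ∈ edgeSupp (branch F e w), (fromEdgeSet ↑(F.erase e)).Reachable w c :=
    fun c hc => let ⟨d, hd, hcd⟩ := mem_edgeSupp_s3.mp hc; (mem_branch.mp hd).2 c hcd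
  exact (reachable_branch_of_reachable (hreach a ha)).symm.trans
    (reachable_branch_of_reachable (hreach b hb))

theorem IsSubtree.branch_union_branch (hF : IsSubtree G F) (he : s(v, u) ∈ F) :
    branch F s(v, u) u ∪ branch F s(v, u) v = F.erase s(v, u) := by
  refine union_subset branch_subset branch_subset |>.antisymm fun d hd => ?_
  have hv : v ∈ edgeSupp F := mem_edgeSupp_s3.mpr ⟨_, he, Sym2.mem_mk_left _ _⟩
  obtain ⟨p⟩ := hF.2.2 _ (mem_edgeSupp_s3.mpr ⟨d, mem_of_mem_erase hd, Sym2.out_fst_mem d⟩) _ hv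
  have hboth : ∀ a ∈ d, (fromEdgeSet ↑(F.erase s(v, u))).Reachable d.out.1 a :=
    fun a ha => reachable_fromEdgeSet_of_mem hd (Sym2.out_fst_mem d) ha
  rcases reachable_erase_of_walk (u := v) (v := u) p (.inl .rfl) with h | h
  · exact mem_union_right _ (mem_branch.mpr ⟨hd, fun a ha => h.trans (hboth a ha)⟩)
  · exact mem_union_left _ (mem_branch.mpr ⟨hd, fun a ha => h.trans (hboth a ha)⟩)

theorem IsSubtree.insert_branch_union_branch (hF : IsSubtree G F) (he : s(v, u) ∈ F) :
    insert s(v, u) (branch F s(v, u) u ∪ branch F s(v, u) v) = F := by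
  rw [hF.branch_union_branch he, insert_erase he]

theorem IsSubtree.card_branch_add_card_branch (hF : IsSubtree G F) (he : s(v, u) ∈ F) :
    #(branch F s(v, u) u) + #(branch F s(v, u) v) + 1 = #F := by
  rw [← card_union_of_disjoint (disjoint_branch hF.2.1 he (hF.ne_of_mem he)),
    hF.branch_union_branch he, card_erase_add_one he]

end Subtree

/-- `∅` stands for the one-vertex tree, so it is counted exactly when `u = v`. -/
noncomputable def subtreesThrough (G : SimpleGraph V) (E : Finset (Sym2 V)) (u v : V) :
    Finset (Finset (Sym2 V)) :=
  E.powerset.filter fun F =>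
    IsSubtree G F ∧ (u = v ∧ F = ∅ ∨ u ∈ edgeSupp F ∧ v ∈ edgeSupp F)

noncomputable def subtreeSum (G : SimpleGraph V) (E : Finset (Sym2 V)) (u v : V) (x : ℝ) : ℝ :=
  ∑ F ∈ subtreesThrough G E u v, x ^ F.card

section SubtreeSum

variable {G : SimpleGraph V} {E F : Finset (Sym2 V)} {e : Sym2 V} {u v w z : V} {x : ℝ}

theorem mem_subtreesThrough : F ∈ subtreesThrough G E u v ↔
    F ⊆ E ∧ IsSubtree G F ∧ (u = v ∧ F = ∅ ∨ u ∈ edgeSupp F ∧ v ∈ edgeSupp F) := by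
  rw [subtreesThrough, mem_filter, mem_powerset]

theorem subtreeSum_nonneg (hx : 0 ≤ x) : 0 ≤ subtreeSum G E u v x :=
  sum_nonneg fun _ _ => pow_nonneg hx _

theorem treeSum2_eq_subtreeSum (hne : u ≠ v) :
    treeSum2 G u v x = subtreeSum G G.edgeFinset u v x := by
  simp [treeSum2, subtreeSum, subtreesThrough, hne]

theorem subtreeSum_self_of_forall_notMem (h : ∀ d ∈ E, v ∉ d) :
    subtreeSum G E v v x = 1 := by
  have : subtreesThrough G E v v = {∅} := by
    ext F
    rw [mem_subtreesThrough, mem_singleton]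
    refine ⟨fun ⟨hFE, _, hF⟩ => hF.elim And.right fun ⟨hv, _⟩ => ?_,
      fun hF => ⟨hF ▸ empty_subset _, hF ▸ isSubtree_empty, .inl ⟨rfl, hF⟩⟩⟩
    obtain ⟨d, hd, hvd⟩ := mem_edgeSupp_s3.mp hv
    exact absurd hvd (h d (hFE hd))
  simp [subtreeSum, this]

theorem card_filter_mem_le_degree (hE : E ⊆ G.edgeFinset) (v : V) :
    #(E.filter (v ∈ ·)) ≤ G.degree v := by
  rw [← card_incidenceFinset_eq_degree, incidenceFinset_eq_filter]
  exact card_le_card (filter_subset_filter _ hE)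

theorem branch_mem_subtreesThrough (hF : IsSubtree G F) (hE : branch F e w ⊆ E)
    (hz : (fromEdgeSet ↑(F.erase e)).Reachable w z) : branch F e w ∈ subtreesThrough G E w z := by
  refine mem_subtreesThrough.mpr ⟨hE, isSubtree_branch hF, ?_⟩
  have hsupp : ∀ {c}, (fromEdgeSet ↑(F.erase e)).Reachable w c → w ≠ c →
      w ∈ edgeSupp (branch F e w) ∧ c ∈ edgeSupp (branch F e w) := fun ⟨p⟩ hwc =>
    have hp := fun d hd => mem_branch_of_mem_edges p hd
    ⟨mem_edgeSupp_of_mem_support hwc hp p.start_mem_support,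
      mem_edgeSupp_of_mem_support hwc hp p.end_mem_support⟩
  rcases eq_or_ne w z with rfl | hwz
  · rcases (branch F e w).eq_empty_or_nonempty with hB | ⟨d, hd⟩
    · exact .inl ⟨rfl, hB⟩
    · refine .inr (and_self_iff.mpr ?_)
      by_cases hw : w = d.out.1
      · exact mem_edgeSupp_s3.mpr ⟨d, hd, hw ▸ Sym2.out_fst_mem d⟩
      · exact (hsupp ((mem_branch.mp hd).2 _ (Sym2.out_fst_mem d)) hw).1
  · exact .inr (hsupp hz hwz)

theorem branch_subset_filter_notMem (hF : IsSubtree G F) (he : s(v, u) ∈ F) (hFE : F ⊆ E) :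
    branch F s(v, u) u ⊆ E.filter (v ∉ ·) := fun _ hd =>
  mem_filter.mpr ⟨hFE (mem_of_mem_erase (branch_subset hd)),
    notMem_of_mem_branch hF.2.1 he (hF.ne_of_mem he) hd⟩

theorem sum_pow_card_le_of_branch (hx : 0 ≤ x) {S A B : Finset (Finset (Sym2 V))}
    (hS : ∀ F ∈ S, IsSubtree G F ∧ s(v, u) ∈ F ∧ branch F s(v, u) u ∈ A ∧ branch F s(v, u) v ∈ B) :
    ∑ F ∈ S, x ^ F.card ≤ x * (∑ F ∈ A, x ^ F.card) * ∑ F ∈ B, x ^ F.card := by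
  let φ (F : Finset (Sym2 V)) := (branch F s(v, u) u, branch F s(v, u) v)
  have hφ : Set.InjOn φ S := fun F hF F' hF' h => by
    rw [← (hS F hF).1.insert_branch_union_branch (hS F hF).2.1,
      ← (hS F' hF').1.insert_branch_union_branch (hS F' hF').2.1]
    simp only [φ, Prod.mk.injEq] at h
    rw [h.1, h.2]
  calc ∑ F ∈ S, x ^ F.card = ∑ F ∈ S, x * x ^ (φ F).1.card * x ^ (φ F).2.card :=
        sum_congr rfl fun F hF => by
          rw [← (hS F hF).1.card_branch_add_card_branch (hS F hF).2.1]
          ring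
    _ = ∑ p ∈ S.image φ, x * x ^ p.1.card * x ^ p.2.card :=
        (sum_image (f := fun p => x * x ^ p.1.card * x ^ p.2.card) hφ).symm
    _ ≤ ∑ p ∈ A ×ˢ B, x * x ^ p.1.card * x ^ p.2.card :=
        sum_le_sum_of_subset_of_nonneg
          (image_subset_iff.mpr fun F hF => mem_product.mpr ⟨(hS F hF).2.2.1, (hS F hF).2.2.2⟩)
          fun _ _ _ => by positivity
    _ = x * (∑ F ∈ A, x ^ F.card) * ∑ F ∈ B, x ^ F.card := by
        rw [sum_product, mul_assoc, sum_mul_sum, mul_sum]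
        simp only [mul_sum, mul_assoc]

end SubtreeSum

section Recursion

variable {G : SimpleGraph V} {E : Finset (Sym2 V)} {u v : V} {x : ℝ}

theorem subtreeSum_self_le_mul (hx : 0 ≤ x) :
    subtreeSum G E v v x ≤
      (1 + x * subtreeSum G (E.filter (v ∉ ·)) u u x) * subtreeSum G (E.erase s(v, u)) v v x := by
  have hwithout : (subtreesThrough G E v v).filter (s(v, u) ∉ ·) =
      subtreesThrough G (E.erase s(v, u)) v v := by
    ext F
    simp only [mem_filter, mem_subtreesThrough, subset_erase]
    tauto
  have hwith : ∑ F ∈ (subtreesThrough G E v v).filter (s(v, u) ∈ ·), x ^ F.card ≤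
      x * subtreeSum G (E.filter (v ∉ ·)) u u x * subtreeSum G (E.erase s(v, u)) v v x :=
    sum_pow_card_le_of_branch hx fun F hF => by
      obtain ⟨hFS, he⟩ := mem_filter.mp hF
      obtain ⟨hFE, hF, -⟩ := mem_subtreesThrough.mp hFS
      exact ⟨hF, he, branch_mem_subtreesThrough hF (branch_subset_filter_notMem hF he hFE) .rfl,
        branch_mem_subtreesThrough hF (branch_subset.trans (erase_subset_erase _ hFE)) .rfl⟩
  rw [subtreeSum, ← sum_filter_add_sum_filter_not _ (s(v, u) ∈ ·), hwithout, ← subtreeSum]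
  linarith

theorem subtreeSum_le_sum_neighbor (hx : 0 ≤ x) {v₁ v₂ : V} (hne : v₁ ≠ v₂) :
    subtreeSum G E v₁ v₂ x ≤ ∑ u ∈ (G.neighborFinset v₁).filter (s(v₁, ·) ∈ E),
      x * subtreeSum G (E.filter (v₁ ∉ ·)) u v₂ x * subtreeSum G E v₁ v₁ x := by
  have hfirst : ∀ F ∈ subtreesThrough G E v₁ v₂,
      ∃ u ∈ (G.neighborFinset v₁).filter (s(v₁, ·) ∈ E),
        s(v₁, u) ∈ F ∧ (fromEdgeSet ↑(F.erase s(v₁, u))).Reachable u v₂ := by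
    intro F hF
    obtain ⟨hFE, hF, hv⟩ := mem_subtreesThrough.mp hF
    obtain ⟨h₁, h₂⟩ := hv.resolve_left fun h => hne h.1
    obtain ⟨p⟩ := hF.2.2 _ h₁ _ h₂
    obtain ⟨u, he, hu⟩ := exists_reachable_erase_of_walk p hne
    exact ⟨u, mem_filter.mpr ⟨(G.mem_neighborFinset _ _).mpr
      (G.mem_edgeSet.mp (G.mem_edgeFinset.mp (hF.1 he))), hFE he⟩, he, hu⟩
  -- `choose!` needs it to return a non-dependent function
  have : Nonempty V := ⟨v₁⟩
  choose! φ hφN hφ using hfirst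
  rw [subtreeSum, ← sum_fiberwise_of_maps_to hφN]
  refine sum_le_sum fun u _ =>
    sum_pow_card_le_of_branch (G := G) (v := v₁) (u := u) hx fun F hF => ?_
  obtain ⟨hFS, rfl⟩ := mem_filter.mp hF
  obtain ⟨hFE, hF, -⟩ := mem_subtreesThrough.mp hFS
  obtain ⟨he, hreach⟩ := hφ F hFS
  exact ⟨hF, he, branch_mem_subtreesThrough hF (branch_subset_filter_notMem hF he hFE) hreach,
    branch_mem_subtreesThrough hF (branch_subset.trans ((erase_subset _ _).trans hFE)) .rfl⟩

end Recursion

section Bounds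

variable {G : SimpleGraph V} {x α : ℝ} {Δ : ℕ}

theorem pow_card_filter_mem_le (hxα : 0 ≤ x * α) (hdeg : ∀ w, G.degree w ≤ Δ)
    (hα : (1 + x * α) ^ Δ ≤ α) {E : Finset (Sym2 V)} (hE : E ⊆ G.edgeFinset) (v : V) :
    (1 + x * α) ^ #(E.filter (v ∈ ·)) ≤ α :=
  (pow_le_pow_right₀ (le_add_of_nonneg_right hxα)
    ((card_filter_mem_le_degree hE v).trans (hdeg v))).trans hα

theorem subtreeSum_self_le_pow (hx : 0 ≤ x) (hxα : 0 ≤ x * α) (hdeg : ∀ w, G.degree w ≤ Δ)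
    (hα : (1 + x * α) ^ Δ ≤ α) (E : Finset (Sym2 V)) (hE : E ⊆ G.edgeFinset) (v : V) :
    subtreeSum G E v v x ≤ (1 + x * α) ^ #(E.filter (v ∈ ·)) := by
  induction E using strongInduction generalizing v with
  | H E ih =>
  rcases (E.filter (v ∈ ·)).eq_empty_or_nonempty with h0 | ⟨e, he⟩
  · rw [subtreeSum_self_of_forall_notMem fun d hd hv => filter_eq_empty_iff.mp h0 hd hv,
      h0, card_empty, pow_zero]
  obtain ⟨heE, hve⟩ := mem_filter.mp he
  obtain ⟨u, rfl⟩ := Sym2.mem_iff_exists.mp hve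
  have hfar : subtreeSum G (E.filter (v ∉ ·)) u u x ≤ α :=
    (ih _ (filter_notMem_ssubset heE) ((filter_subset _ _).trans hE) u).trans
      (pow_card_filter_mem_le hxα hdeg hα ((filter_subset _ _).trans hE) u)
  have hnear : subtreeSum G (E.erase s(v, u)) v v x ≤ (1 + x * α) ^ (#(E.filter (v ∈ ·)) - 1) := by
    rw [← card_erase_of_mem he, ← filter_erase]
    exact ih _ (erase_ssubset heE) ((erase_subset _ _).trans hE) v
  calc subtreeSum G E v v x
      ≤ (1 + x * subtreeSum G (E.filter (v ∉ ·)) u u x) * subtreeSum G (E.erase s(v, u)) v v x :=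
        subtreeSum_self_le_mul hx
    _ ≤ (1 + x * α) * (1 + x * α) ^ (#(E.filter (v ∈ ·)) - 1) := by
        gcongr
        exact subtreeSum_nonneg hx
    _ = (1 + x * α) ^ #(E.filter (v ∈ ·)) := by
        rw [← pow_succ', Nat.sub_add_cancel (card_pos.mpr ⟨_, he⟩)]

theorem subtreeSum_self_le (hx : 0 ≤ x) (hxα : 0 ≤ x * α) (hdeg : ∀ w, G.degree w ≤ Δ)
    (hα : (1 + x * α) ^ Δ ≤ α) {E : Finset (Sym2 V)} (hE : E ⊆ G.edgeFinset) (v : V) :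
    subtreeSum G E v v x ≤ α :=
  (subtreeSum_self_le_pow hx hxα hdeg hα E hE v).trans (pow_card_filter_mem_le hxα hdeg hα hE v)

end Bounds

/-- The inductive step of `subtreeSum_le_pow_of_le_length`: `w` is the target vertex, which can be
a neighbour only when the required path length `g` is at most `1`. -/
theorem sum_mul_le_pow_mul {ι : Type*} [DecidableEq ι] {N : Finset ι} {w : ι} {Q : ι → ℝ}
    {c a L K : ℝ} {g : ℕ} (hc : 0 ≤ c) (hL : 0 ≤ L) (hL₁ : L ≤ 1) (hK : 0 ≤ K)
    (hN : #N * c ≤ L) (hcK : c * a + L * K ≤ K) (hQ : ∀ u ∈ N, u ≠ w → Q u ≤ L ^ (g - 2) * K)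
    (hw : w ∈ N → Q w ≤ a ∧ g ≤ 1) :
    ∑ u ∈ N, c * Q u ≤ L ^ (g - 1) * K := by
  by_cases hwN : w ∈ N
  · obtain ⟨hQw, hg⟩ := hw hwN
    have hrest : ∑ u ∈ N.erase w, c * Q u ≤ L * K := calc
      _ ≤ ∑ u ∈ N.erase w, c * K := sum_le_sum fun u hu => by
          have := hQ u (mem_of_mem_erase hu) (ne_of_mem_erase hu)
          rw [show g - 2 = 0 by omega, pow_zero, one_mul] at this
          exact mul_le_mul_of_nonneg_left this hc
      _ = #(N.erase w) * c * K := by rw [sum_const, nsmul_eq_mul]; ring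
      _ ≤ #N * c * K := by gcongr; exact erase_subset _ _
      _ ≤ L * K := mul_le_mul_of_nonneg_right hN hK
    rw [← add_sum_erase _ _ hwN, show g - 1 = 0 by omega, pow_zero, one_mul]
    nlinarith [mul_le_mul_of_nonneg_left hQw hc]
  · calc ∑ u ∈ N, c * Q u ≤ ∑ u ∈ N, c * (L ^ (g - 2) * K) :=
          sum_le_sum fun u hu =>
            mul_le_mul_of_nonneg_left (hQ u hu (ne_of_mem_of_not_mem hu hwN)) hc
      _ = #N * c * (L ^ (g - 2) * K) := by rw [sum_const, nsmul_eq_mul]; ring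
      _ ≤ L * (L ^ (g - 2) * K) := mul_le_mul_of_nonneg_right hN (by positivity)
      _ = L ^ (g - 2 + 1) * K := by ring
      _ ≤ L ^ (g - 1) * K :=
          mul_le_mul_of_nonneg_right (pow_le_pow_of_le_one hL hL₁ (by omega)) hK

theorem subtreeSum_le_pow_of_le_length {G : SimpleGraph V} {x α L K : ℝ} {Δ : ℕ}
    (hx : 0 ≤ x) (hα : 0 ≤ α) (hL : 0 ≤ L) (hL₁ : L ≤ 1) (hK : 0 ≤ K)
    (hxL : Δ * (x * α) ≤ L) (hxK : x * α * α + L * K ≤ K) (hdeg : ∀ w, G.degree w ≤ Δ)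
    (hR : ∀ E ⊆ G.edgeFinset, ∀ v, subtreeSum G E v v x ≤ α)
    (E : Finset (Sym2 V)) (hE : E ⊆ G.edgeFinset) (v₁ v₂ : V) (hne : v₁ ≠ v₂) (g : ℕ)
    (hg : ∀ p : (fromEdgeSet (E : Set (Sym2 V))).Walk v₁ v₂, g ≤ p.length) :
    subtreeSum G E v₁ v₂ x ≤ L ^ (g - 1) * K := by
  induction E using strongInduction generalizing v₁ g with
  | H E ih =>
  set N := (G.neighborFinset v₁).filter (s(v₁, ·) ∈ E)
  have hE' : E.filter (v₁ ∉ ·) ⊆ G.edgeFinset := (filter_subset _ _).trans hE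
  have hadj {u} (hu : u ∈ N) : (fromEdgeSet (E : Set (Sym2 V))).Adj v₁ u :=
    (fromEdgeSet_adj _).mpr ⟨(mem_filter.mp hu).2,
      ((G.mem_neighborFinset _ _).mp (mem_filter.mp hu).1).ne⟩
  have hN : (#N : ℝ) * (x * α) ≤ L := by
    refine le_trans (mul_le_mul_of_nonneg_right ?_ (mul_nonneg hx hα)) hxL
    exact_mod_cast (card_filter_le _ _).trans
      ((card_neighborFinset_eq_degree G v₁).trans_le (hdeg v₁))
  have hfar (u) (hu : u ∈ N) (hu₂ : u ≠ v₂) :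
      subtreeSum G (E.filter (v₁ ∉ ·)) u v₂ x ≤ L ^ (g - 2) * K := by
    have hsub := fromEdgeSet_mono (coe_subset.mpr (filter_subset (v₁ ∉ ·) E))
    have := ih _ (filter_notMem_ssubset (mem_filter.mp hu).2) hE' u hu₂ (g - 1) fun q => by
        have := hg (.cons (hadj hu) (q.mapLe hsub))
        rw [Walk.length_cons, Walk.length_mapLe] at this
        omega
    rwa [Nat.sub_sub] at this
  calc subtreeSum G E v₁ v₂ x
      ≤ ∑ u ∈ N, x * subtreeSum G (E.filter (v₁ ∉ ·)) u v₂ x * subtreeSum G E v₁ v₁ x :=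
        subtreeSum_le_sum_neighbor hx hne
    _ ≤ ∑ u ∈ N, x * α * subtreeSum G (E.filter (v₁ ∉ ·)) u v₂ x :=
        sum_le_sum fun u _ => by
          rw [mul_right_comm]
          exact mul_le_mul_of_nonneg_right (mul_le_mul_of_nonneg_left (hR E hE v₁) hx)
            (subtreeSum_nonneg hx)
    _ ≤ L ^ (g - 1) * K :=
        sum_mul_le_pow_mul (mul_nonneg hx hα) hL hL₁ hK hN hxK hfar fun hv₂ =>
          ⟨hR _ hE' v₂, by simpa using hg (.cons (hadj hv₂) .nil)⟩

/-- If moreover every path between `v₁` and `v₂` has more than `g` vertices, then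
`T_{G,v₁,v₂}(ln α/(αΔ)) ≤ (ln α)^{g-1} · α ln α / (Δ(1 - ln α))`. -/
theorem treeSum2_girth_le (G : SimpleGraph V) (Δ : ℕ) (hΔ : 1 ≤ Δ)
    (hdeg : ∀ w : V, G.degree w ≤ Δ) (v₁ v₂ : V) (hne : v₁ ≠ v₂) (g : ℕ)
    (hpath : ∀ p : G.Walk v₁ v₂, p.IsPath → g < p.support.length)
    (α : ℝ) (hα : 1 ≤ α) (hα' : α < Real.exp 1) :
    treeSum2 G v₁ v₂ (Real.log α / (α * Δ)) ≤
      (Real.log α) ^ (g - 1) * (α * Real.log α / (Δ * (1 - Real.log α))) := by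
  set L := Real.log α
  have hα₀ : 0 < α := by linarith
  have hL : 0 ≤ L := Real.log_nonneg hα
  have hL₁ : L < 1 := by simpa using Real.log_lt_log hα₀ hα'
  have h1L : 1 - L ≠ 0 := by linarith
  have hΔ₀ : (0 : ℝ) < Δ := by exact_mod_cast hΔ
  have hxα : L / (α * Δ) * α = L / Δ := by field_simp
  have hexp : (1 + L / (α * Δ) * α) ^ Δ ≤ α := by
    rw [hxα, ← Real.exp_log hα₀]
    simpa [sub_eq_add_neg, neg_div] using
      Real.one_sub_div_pow_le_exp_neg (n := Δ) (t := -L) (by linarith)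
  have hwalk (p : (fromEdgeSet (G.edgeFinset : Set (Sym2 V))).Walk v₁ v₂) : g ≤ p.length := by
    have hle : fromEdgeSet (G.edgeFinset : Set (Sym2 V)) ≤ G := by
      rw [coe_edgeFinset, fromEdgeSet_edgeSet]
    simpa using le_length_of_forall_isPath hpath (p.mapLe hle)
  rw [treeSum2_eq_subtreeSum hne]
  refine subtreeSum_le_pow_of_le_length (by positivity) hα₀.le hL hL₁.le (by positivity)
    (by rw [hxα, mul_div_cancel₀ _ hΔ₀.ne']) (le_of_eq (by field_simp; ring)) hdeg
    (fun E hE v => subtreeSum_self_le (by positivity) (by positivity) hdeg hexp hE v)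
    _ subset_rfl v₁ v₂ hne g hwalk
end

section
/- Let G = (V,E) be a finite multigraph, let v ∈ V, and suppose every vertex except possibly v has degree at most Δ ∈ ℕ. Then for every vertex u ≠ v and every c ∈ [0,1], Σ_{P ∈ 𝓟_{G,u,v}} (c/Δ)^{|P|} ≤ c, where 𝓟_{G,u,v} is the set of paths in G from u to v and |P| is the number of edges of P. -/
open Finset

attribute [local instance] Classical.propDecidable

variable {V E : Type} [Fintype V] [Fintype E] [DecidableEq V] [DecidableEq E]

/-- `chainOk ends vs es` says that the vertex list `vs` and edge list `es` form a walk: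
`vs = [w₀, …, w_k]`, `es = [e₁, …, e_k]` and `ends eᵢ = s(w_{i-1}, w_i)`. -/
def chainOk (ends : E → Sym2 V) : List V → List E → Prop
  | [_], [] => True
  | a :: b :: vs, e :: es => ends e = s(a, b) ∧ chainOk ends (b :: vs) es
  | _, _ => False

/-- `es` is (the edge list of) a path from `u` to `v` in the multigraph with edge-end
map `ends`: a walk with distinct vertices. -/
def IsPathList (ends : E → Sym2 V) (u v : V) (es : List E) : Prop :=
  ∃ vs : List V, vs.Nodup ∧ vs.head? = some u ∧ vs.getLast? = some v ∧ chainOk ends vs es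

/-- `P` is the edge set of a path from `u` to `v`. -/
def IsPathSet (ends : E → Sym2 V) (u v : V) (P : Finset E) : Prop :=
  ∃ es : List E, es.Nodup ∧ es.toFinset = P ∧ IsPathList ends u v es

/-- The set `𝓟_{G,u,v}` of (edge sets of) paths from `u` to `v`. -/
noncomputable def pathSets (ends : E → Sym2 V) (u v : V) : Finset (Finset E) :=
  Finset.univ.filter (IsPathSet ends u v)

/-- Degree of a vertex in a multigraph: loops count twice. -/
def mdeg (ends : E → Sym2 V) (v : V) : ℕ :=
  ∑ e : E, (if ends e = s(v, v) then 2 else if v ∈ ends e then 1 else 0)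

/-!
Strengthen the claim to paths that avoid a set `F` of vertices and induct on the number of
vertices outside `F`. A path from `u ≠ v` starts with a non-loop edge `e = s(u, w)` and continues
with a path from `w` to `v` avoiding `F ∪ {u}`, whose generating function is at most `1`: it is
the empty path if `w = v`, and by induction it is at most `Δ x ≤ 1` otherwise. There are at most
`deg u ≤ Δ` choices of `e`, so the generating function with `x = c / Δ` is at most `Δ x ≤ c`.
-/

noncomputable def pathSetsAvoiding (ends : E → Sym2 V) (F : Finset V) (u v : V) :
    Finset (Finset E) :=
  univ.filter fun P => ∃ es : List E, es.Nodup ∧ es.toFinset = P ∧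
    ∃ vs : List V, vs.Nodup ∧ (∀ w ∈ vs, w ∉ F) ∧ vs.head? = some u ∧
      vs.getLast? = some v ∧ chainOk ends vs es

variable {ends : E → Sym2 V} {F : Finset V} {u v : V}

section

omit [Fintype V] [DecidableEq V]

lemma mem_pathSetsAvoiding {P : Finset E} :
    P ∈ pathSetsAvoiding ends F u v ↔ ∃ es : List E, es.Nodup ∧ es.toFinset = P ∧
      ∃ vs : List V, vs.Nodup ∧ (∀ w ∈ vs, w ∉ F) ∧ vs.head? = some u ∧
        vs.getLast? = some v ∧ chainOk ends vs es := by
  simp [pathSetsAvoiding]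

lemma pathSetsAvoiding_empty : pathSetsAvoiding ends ∅ u v = pathSets ends u v := by
  ext P
  simp [mem_pathSetsAvoiding, pathSets, IsPathSet, IsPathList]

lemma pathSetsAvoiding_eq_empty_of_mem (hu : u ∈ F) : pathSetsAvoiding ends F u v = ∅ := by
  refine eq_empty_of_forall_notMem fun P hP => ?_
  obtain ⟨-, -, -, vs, -, hF, hhead, -⟩ := mem_pathSetsAvoiding.1 hP
  exact hF u (List.mem_of_mem_head? hhead) hu

lemma pathSetsAvoiding_self_subset : pathSetsAvoiding ends F v v ⊆ {∅} := by
  intro P hP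
  obtain ⟨es, -, rfl, vs, hvs, -, hhead, hlast, hchain⟩ := mem_pathSetsAvoiding.1 hP
  match vs, es, hchain with
  | [_], [], _ => simp
  | a :: b :: vs, _ :: _, _ =>
    cases Option.some.inj hhead
    rw [List.getLast?_cons_cons] at hlast
    exact absurd (List.mem_of_getLast? hlast) (List.nodup_cons.1 hvs).1

lemma sum_pathSetsAvoiding_self_pow_le_one {x : ℝ} (hx : 0 ≤ x) :
    ∑ P ∈ pathSetsAvoiding ends F v v, x ^ P.card ≤ 1 :=
  calc ∑ P ∈ pathSetsAvoiding ends F v v, x ^ P.card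
      ≤ ∑ P ∈ ({∅} : Finset (Finset E)), x ^ P.card :=
        sum_le_sum_of_subset_of_nonneg pathSetsAvoiding_self_subset fun _ _ _ => by positivity
    _ = 1 := by simp

end

omit [Fintype V] in
lemma exists_eq_insert_of_mem_pathSetsAvoiding (huv : u ≠ v) {P : Finset E}
    (hP : P ∈ pathSetsAvoiding ends F u v) :
    ∃ e w, ends e = s(u, w) ∧ w ≠ u ∧
      ∃ Q ∈ pathSetsAvoiding ends (insert u F) w v, e ∉ Q ∧ insert e Q = P := by
  obtain ⟨es, hes, rfl, vs, hvs, hF, hhead, hlast, hchain⟩ := mem_pathSetsAvoiding.1 hP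
  match vs, es, hchain with
  | [_], [], _ =>
    cases Option.some.inj hhead
    exact absurd (Option.some.inj hlast) huv
  | a :: b :: vs, e :: es, ⟨he, hchain⟩ =>
    cases Option.some.inj hhead
    obtain ⟨hu, hvs⟩ := List.nodup_cons.1 hvs
    obtain ⟨he_notMem, hes⟩ := List.nodup_cons.1 hes
    refine ⟨e, b, he, fun h => hu (h ▸ List.mem_cons_self), es.toFinset,
      mem_pathSetsAvoiding.2 ⟨es, hes, rfl, b :: vs, hvs, ?_, rfl, ?_, hchain⟩,
      List.mem_toFinset.not.2 he_notMem, List.toFinset_cons.symm⟩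
    · intro w hw
      rw [mem_insert, not_or]
      exact ⟨fun h => hu (h ▸ hw), hF w (List.mem_cons_of_mem _ hw)⟩
    · rwa [List.getLast?_cons_cons] at hlast

omit [DecidableEq E] in
lemma card_nonloop_incidences_le_mdeg (u : V) :
    #{p : E × V | ends p.1 = s(u, p.2) ∧ p.2 ≠ u} ≤ mdeg ends u := by
  calc #{p : E × V | ends p.1 = s(u, p.2) ∧ p.2 ≠ u}
      ≤ #{e : E | u ∈ ends e ∧ ends e ≠ s(u, u)} := by
        refine card_le_card_of_injOn Prod.fst (fun p hp => ?_) ?_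
        · simp only [coe_filter, mem_univ, true_and, Set.mem_ofPred_eq] at hp ⊢
          rw [hp.1]
          exact ⟨Sym2.mem_mk_left _ _, fun h => hp.2 (Sym2.congr_right.1 h)⟩
        · rintro ⟨e, w⟩ hp ⟨e', w'⟩ hp' (rfl : e = e')
          simp only [coe_filter, mem_univ, true_and, Set.mem_ofPred_eq] at hp hp'
          simp [Sym2.congr_right.1 (hp.1.symm.trans hp'.1)]
    _ ≤ mdeg ends u := by
        rw [card_filter, mdeg]
        gcongr with e
        split_ifs <;> simp_all

theorem sum_pathSetsAvoiding_pow_le {Δ : ℕ} (hdeg : ∀ w : V, w ≠ v → mdeg ends w ≤ Δ)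
    {x : ℝ} (hx : 0 ≤ x) (hΔx : Δ * x ≤ 1) (F : Finset V) (u : V) (hu : u ≠ v) :
    ∑ P ∈ pathSetsAvoiding ends F u v, x ^ P.card ≤ Δ * x := by
  by_cases huF : u ∈ F
  · rw [pathSetsAvoiding_eq_empty_of_mem huF, sum_empty]
    positivity
  have htail (w : V) : ∑ Q ∈ pathSetsAvoiding ends (insert u F) w v, x ^ Q.card ≤ 1 := by
    rcases eq_or_ne w v with rfl | hw
    · exact sum_pathSetsAvoiding_self_pow_le_one hx
    · exact (sum_pathSetsAvoiding_pow_le hdeg hx hΔx (insert u F) w hw).trans hΔx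
  set D : Finset (E × V) := {p | ends p.1 = s(u, p.2) ∧ p.2 ≠ u}
  set S := D.sigma fun p => pathSetsAvoiding ends (insert u F) p.2 v
  have hcover : pathSetsAvoiding ends F u v ⊆
      {q ∈ S | q.1.1 ∉ q.2}.image fun q => insert q.1.1 q.2 := by
    intro P hP
    obtain ⟨e, w, he, hw, Q, hQ, heQ, rfl⟩ := exists_eq_insert_of_mem_pathSetsAvoiding hu hP
    exact mem_image.2 ⟨⟨(e, w), Q⟩, by simp [S, D, he, hw, hQ, heQ], rfl⟩
  calc ∑ P ∈ pathSetsAvoiding ends F u v, x ^ P.card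
      ≤ ∑ q ∈ {q ∈ S | q.1.1 ∉ q.2}, x ^ (insert q.1.1 q.2).card :=
        (sum_le_sum_of_subset_of_nonneg hcover fun _ _ _ => by positivity).trans
          (sum_image_le_of_nonneg fun _ _ => by positivity)
    _ = ∑ q ∈ {q ∈ S | q.1.1 ∉ q.2}, x ^ q.2.card * x :=
        sum_congr rfl fun q hq => by rw [card_insert_of_notMem (mem_filter.1 hq).2, pow_succ]
    _ ≤ ∑ q ∈ S, x ^ q.2.card * x :=
        sum_le_sum_of_subset_of_nonneg (filter_subset _ _) fun _ _ _ => by positivity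
    _ = ∑ p ∈ D, (∑ Q ∈ pathSetsAvoiding ends (insert u F) p.2 v, x ^ Q.card) * x := by
        simp only [S, sum_sigma, sum_mul]
    _ ≤ ∑ _p ∈ D, 1 * x := sum_le_sum fun p _ => mul_le_mul_of_nonneg_right (htail p.2) hx
    _ = #D * x := by simp
    _ ≤ Δ * x := by
        gcongr
        exact_mod_cast (card_nonloop_incidences_le_mdeg u).trans (hdeg u hu)
termination_by #(univ \ F)
decreasing_by
  rw [sdiff_insert]
  exact card_erase_lt_of_mem (mem_sdiff.2 ⟨mem_univ u, huF⟩)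

/-- Lemma 4.1: if every vertex of a finite multigraph except possibly `v` has degree at
most `Δ`, then for any `u ≠ v` and `c ∈ [0,1]`,
`Σ_{P ∈ 𝓟_{G,u,v}} (c/Δ)^{|P|} ≤ c`. -/
theorem path_generating_le (ends : E → Sym2 V) (v : V) (Δ : ℕ)
    (hdeg : ∀ w : V, w ≠ v → mdeg ends w ≤ Δ) (u : V) (hu : u ≠ v)
    (c : ℝ) (hc : c ∈ Set.Icc (0 : ℝ) 1) :
    ∑ P ∈ pathSets ends u v, (c / Δ) ^ P.card ≤ c := by
  have hΔc : Δ * (c / Δ) ≤ c := by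
    rcases eq_or_ne Δ 0 with rfl | hΔ
    · simpa using hc.1
    · rw [mul_div_cancel₀ _ (Nat.cast_ne_zero.2 hΔ)]
  rw [← pathSetsAvoiding_empty]
  exact (sum_pathSetsAvoiding_pow_le hdeg (div_nonneg hc.1 Δ.cast_nonneg)
    (hΔc.trans hc.2) ∅ u hu).trans hΔc
end

section
/- Let G = (V,E) be a finite simple graph, let v ∈ V, and suppose all vertices of G except possibly v have degree at most Δ ∈ ℕ. Then the forest generating function Z_G(x) = Σ_{F ⊆ E : (V,F) is a forest} x^{|F|} satisfies Z_G(x) ≠ 0 for all complex x with |x| ≤ 1/(2Δ). -/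
open Finset

attribute [local instance] Classical.propDecidable

variable {V : Type} [Fintype V] [DecidableEq V]

/-- The forest generating function `Z_G(x) = Σ_{F ⊆ E, (V,F) forest} x^{|F|}`. -/
noncomputable def forestSum (G : SimpleGraph V) (x : ℂ) : ℂ :=
  ∑ F ∈ G.edgeFinset.powerset.filter
      (fun (F : Finset (Sym2 V)) => (SimpleGraph.fromEdgeSet (↑F : Set (Sym2 V))).IsAcyclic), x ^ F.card

/-! Write `Z(B, S)` for the forest generating function of the edge set `B` with the vertex set
`S` contracted to a single vertex, and `C(B, S, p)` for the part of it in which `p ∉ S` is joined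
to `S`, so that `Z(B, S) = Z(B, S + p) + C(B, S, p)`. Deletion–contraction of an edge `tw` with
`t ∈ S`, `w ∉ S` reads `Z(B, S) = Z(B - tw, S) + x Z(B - tw, S + w)`, and cutting a forest of
`C(B, S, p)` at the first edge `pz` of the path from `p` to `S` gives
`C(B, S, p) = x Σ_z C(B - pz, S, z)` with `p` added to the separated set.

If `p` has degree less than `Δ`, the sum has at most `Δ - 1` terms, and induction on `|B|` gives
`|C(B, S, p)| ≤ |Z(B, S)|` once `2Δ|x| ≤ 1`. Hence `|Z(B - tw, S + w)| ≤ 2 |Z(B - tw, S)|` and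
`|Z(B, S)| ≥ (1 - 2|x|) |Z(B - tw, S)|`, which is nonzero by a second induction on `|B|`. -/

open SimpleGraph

namespace SimpleGraph

variable {V : Type*} {G : SimpleGraph V}

lemma reachable_or_of_sup_edge {c d a b : V} (h : (G ⊔ edge c d).Reachable a b) :
    G.Reachable a b ∨ G.Reachable a c ∧ G.Reachable d b ∨ G.Reachable a d ∧ G.Reachable c b := by
  rw [reachable_iff_reflTransGen] at h
  induction h with
  | refl => exact .inl .rfl
  | tail _ hadj ih =>
    rw [sup_adj, edge_adj] at hadj
    rcases hadj with hadj | ⟨⟨rfl, rfl⟩ | ⟨rfl, rfl⟩, -⟩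
    · grind [Adj.reachable, Reachable.trans]
    · grind [Reachable.refl]
    · grind [Reachable.refl]

lemma isAcyclic_sup_edge_iff {a b : V} (hab : a ≠ b) (hadj : ¬G.Adj a b) :
    (G ⊔ edge a b).IsAcyclic ↔ G.IsAcyclic ∧ ¬G.Reachable a b := by
  simp [isAcyclic_sup_fromEdgeSet_iff, hab, hadj]

lemma IsAcyclic.not_reachable_deleteEdges (hG : G.IsAcyclic) {a b : V} (hab : G.Adj a b) :
    ¬(G.deleteEdges {s(a, b)}).Reachable a b :=
  isBridge_iff.mp (isAcyclic_iff_forall_adj_isBridge.mp hG hab)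

lemma IsIsolated.eq_of_reachable {v w : V} (hv : G.IsIsolated v) (h : G.Reachable v w) : v = w := by
  obtain ⟨q⟩ := h
  cases q with
  | nil => rfl
  | cons hadj _ => exact absurd hadj (hv _)

end SimpleGraph

namespace ForestSum

local notation "𝒢" F:max => SimpleGraph.fromEdgeSet (SetLike.coe F)

lemma sum_pow_card_eq_add_mul {α R : Type*} [DecidableEq α] [CommSemiring R] (x : R)
    {B : Finset α} {e : α} (he : e ∈ B) {P Q : Finset α → Prop} [DecidablePred P]
    [DecidablePred Q] (hPQ : ∀ F ⊆ B.erase e, P (insert e F) ↔ Q F) :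
    ∑ F ∈ B.powerset with P F, x ^ #F =
      ∑ F ∈ (B.erase e).powerset with P F, x ^ #F +
        x * ∑ F ∈ (B.erase e).powerset with Q F, x ^ #F := by
  simp only [Finset.sum_filter, Finset.mul_sum]
  conv_lhs => rw [← Finset.insert_erase he]
  rw [Finset.sum_powerset_insert (Finset.notMem_erase e B)]
  congr 1
  refine Finset.sum_congr rfl fun F hF => ?_
  rw [Finset.mem_powerset] at hF
  have heF : e ∉ F := fun h => by simpa using hF h
  simp only [hPQ F hF, Finset.card_insert_of_notMem heF, pow_succ', mul_ite, mul_zero]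

section Forests

variable {V : Type*} {R : Type*} [CommSemiring R]

def IsSeparatingForest (S : Finset V) (F : Finset (Sym2 V)) : Prop :=
  (𝒢 F).IsAcyclic ∧ (S : Set V).Pairwise fun a b => ¬(𝒢 F).Reachable a b

lemma IsSeparatingForest.mono {S T : Finset V} {F : Finset (Sym2 V)} (hF : IsSeparatingForest T F)
    (hST : S ⊆ T) : IsSeparatingForest S F :=
  ⟨hF.1, hF.2.mono (Finset.coe_subset.mpr hST)⟩

/-- The forests of the graph `B` with `S` contracted to a point are the forests `F ⊆ B` joining no
two vertices of `S`. -/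
noncomputable def sepForestSum (x : R) (B : Finset (Sym2 V)) (S : Finset V) : R :=
  ∑ F ∈ B.powerset with IsSeparatingForest S F, x ^ #F

lemma sepForestSum_empty (x : R) (S : Finset V) : sepForestSum x ∅ S = 1 := by
  have h : IsSeparatingForest S (∅ : Finset (Sym2 V)) := by
    simp [IsSeparatingForest, Set.Pairwise, reachable_bot]
  simp [sepForestSum, Finset.filter_singleton, h]

end Forests

section Identities

variable {V : Type*} [DecidableEq V] {R : Type*} [CommSemiring R]

lemma fromEdgeSet_insert (F : Finset (Sym2 V)) (a b : V) :
    𝒢 (insert s(a, b) F) = 𝒢 F ⊔ edge a b := by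
  rw [Finset.coe_insert, Set.insert_eq, fromEdgeSet_union, sup_comm, edge]

lemma fromEdgeSet_erase (F : Finset (Sym2 V)) (e : Sym2 V) :
    𝒢 (F.erase e) = (𝒢 F).deleteEdges {e} := by
  rw [Finset.coe_erase, fromEdgeSet_sdiff, deleteEdges]

lemma isSeparatingForest_insert_edge_iff {S : Finset V} {F : Finset (Sym2 V)} {t w u : V}
    (htw : t ≠ w) (he : s(t, w) ∉ F) (hu : u ∈ S) (htu : (𝒢 F).Reachable t u) (hw : w ∉ S) :
    IsSeparatingForest S (insert s(t, w) F) ↔ IsSeparatingForest (insert w S) F := by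
  have hadj : ¬(𝒢 F).Adj t w := fun h => he ((fromEdgeSet_adj _).mp h).1
  unfold IsSeparatingForest
  rw [fromEdgeSet_insert, isAcyclic_sup_edge_iff htw hadj, Finset.coe_insert,
    Set.pairwise_insert_of_notMem (Finset.mem_coe.not.mpr hw)]
  constructor
  · rintro ⟨⟨hF, hntw⟩, hS⟩
    have hwS : ∀ b ∈ S, ¬(𝒢 F).Reachable w b := fun b hb hwb => by
      have hub : u = b := by
        by_contra hub
        refine hS hu hb hub ?_
        have hedge : (𝒢 F ⊔ edge t w).Adj t w := by simp [edge_adj, htw]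
        exact ((htu.symm.mono le_sup_left).trans hedge.reachable).trans (hwb.mono le_sup_left)
      exact hntw (htu.trans (hub ▸ hwb.symm))
    exact ⟨hF, hS.mono' fun a b h h' => h (h'.mono le_sup_left), fun b hb =>
      ⟨hwS b hb, fun h => hwS b hb h.symm⟩⟩
  · rintro ⟨hF, hS, hwS⟩
    have hntw : ¬(𝒢 F).Reachable t w := fun h => (hwS u hu).1 (h.symm.trans htu)
    refine ⟨⟨hF, hntw⟩, fun a ha b hb hab h => ?_⟩
    rcases reachable_or_of_sup_edge h with h | ⟨-, h⟩ | ⟨h, -⟩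
    · exact hS ha hb hab h
    · exact (hwS b hb).1 h
    · exact (hwS a ha).2 h

lemma isSeparatingForest_insert_iff {S : Finset V} {F : Finset (Sym2 V)} {p : V} (hp : p ∉ S) :
    IsSeparatingForest (insert p S) F ↔
      IsSeparatingForest S F ∧ ∀ u ∈ S, ¬(𝒢 F).Reachable p u := by
  unfold IsSeparatingForest
  rw [Finset.coe_insert, Set.pairwise_insert_of_notMem (Finset.mem_coe.not.mpr hp)]
  exact ⟨fun ⟨hF, hS, h⟩ => ⟨⟨hF, hS⟩, fun u hu => (h u hu).1⟩,
    fun ⟨⟨hF, hS⟩, h⟩ => ⟨hF, hS, fun u hu => ⟨h u hu, fun h' => h u hu h'.symm⟩⟩⟩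

def IsFirstStep (U : Finset V) (F : Finset (Sym2 V)) (p z : V) : Prop :=
  (𝒢 F).Adj p z ∧ ∃ u ∈ U, (𝒢 (F.erase s(p, z))).Reachable z u

lemma exists_isFirstStep {U : Finset V} {F : Finset (Sym2 V)} {p u : V} (hu : u ∈ U) (hp : p ∉ U)
    (h : (𝒢 F).Reachable p u) : ∃ z, IsFirstStep U F p z := by
  obtain ⟨q, hq⟩ := h.exists_isPath
  cases q with
  | nil => exact absurd hu hp
  | cons hadj q =>
    rw [Walk.cons_isPath_iff] at hq
    refine ⟨_, hadj, u, hu, ⟨q.transfer _ fun e he => ?_⟩⟩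
    rw [fromEdgeSet_erase, edgeSet_deleteEdges]
    refine ⟨q.edges_subset_edgeSet he, fun h => hq.2 ?_⟩
    rw [Set.mem_singleton_iff] at h
    subst h
    exact q.fst_mem_support_of_mem_edges he

lemma IsFirstStep.unique {U : Finset V} {F : Finset (Sym2 V)} {p z₁ z₂ : V}
    (hF : IsSeparatingForest U F) (h₁ : IsFirstStep U F p z₁) (h₂ : IsFirstStep U F p z₂) :
    z₁ = z₂ := by
  obtain ⟨hadj₁, u, hu, hz₁⟩ := h₁
  obtain ⟨hadj₂, u₂, hu₂, hz₂⟩ := h₂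
  by_contra hne
  have hreach : ∀ {z v}, (𝒢 F).Adj p z → (𝒢 (F.erase s(p, z))).Reachable z v →
      (𝒢 F).Reachable p v := fun hadj hz =>
    hadj.reachable.trans (hz.mono (fromEdgeSet_mono (by simp)))
  obtain rfl : u = u₂ := by
    by_contra h
    exact hF.2 hu hu₂ h ((hreach hadj₁ hz₁).symm.trans (hreach hadj₂ hz₂))
  have bridge₁ := IsAcyclic.not_reachable_deleteEdges hF.1 hadj₁
  have bridge₂ := IsAcyclic.not_reachable_deleteEdges hF.1 hadj₂
  rw [← fromEdgeSet_erase] at bridge₁ bridge₂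
  set F₀ := (F.erase s(p, z₂)).erase s(p, z₁)
  have hF₀₁ : 𝒢 F₀ ≤ 𝒢 (F.erase s(p, z₁)) :=
    fromEdgeSet_mono (Finset.coe_subset.mpr (Finset.erase_subset_erase _ (Finset.erase_subset _ F)))
  have hF₀₂ : 𝒢 F₀ ≤ 𝒢 (F.erase s(p, z₂)) := fromEdgeSet_mono (by simp [F₀])
  have hsplit : F.erase s(p, z₂) = insert s(p, z₁) F₀ := by
    refine (Finset.insert_erase ?_).symm
    simp_all
  have hpu : (𝒢 (F.erase s(p, z₁))).Reachable p u := by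
    rw [hsplit, fromEdgeSet_insert] at hz₂
    rcases reachable_or_of_sup_edge hz₂ with h | ⟨h, -⟩ | ⟨-, h⟩
    · have hadj : (𝒢 (F.erase s(p, z₁))).Adj p z₂ := by simp_all [eq_comm]
      exact hadj.reachable.trans (h.mono hF₀₁)
    · exact absurd (h.mono hF₀₂).symm bridge₂
    · exact h.mono hF₀₁
  exact bridge₁ (hpu.trans hz₁.symm)

/-- `p` is joined to `U`; the vertices of `W` are only required to stay separated. -/
def IsLinkedForest (U W : Finset V) (p : V) (F : Finset (Sym2 V)) : Prop :=
  IsSeparatingForest (U ∪ W) F ∧ ∃ u ∈ U, (𝒢 F).Reachable p u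

noncomputable def linkedForestSum (x : R) (B : Finset (Sym2 V)) (U W : Finset V) (p : V) : R :=
  ∑ F ∈ B.powerset with IsLinkedForest U W p F, x ^ #F

variable (x : R)

lemma isLinkedForest_insert_iff {U W : Finset V} {F : Finset (Sym2 V)} {p z : V}
    (hp : p ∉ U ∪ W) (hpz : p ≠ z) (he : s(p, z) ∉ F) :
    IsLinkedForest U W p (insert s(p, z) F) ∧ IsFirstStep U (insert s(p, z) F) p z ↔
      IsLinkedForest U (insert p W) z F := by
  have he' : s(z, p) ∉ F := by rwa [Sym2.eq_swap]
  have hadj : (𝒢 (insert s(p, z) F)).Adj p z := by simp [hpz]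
  unfold IsLinkedForest IsFirstStep
  rw [Finset.erase_insert he, Finset.union_insert]
  constructor
  · rintro ⟨⟨hF, -⟩, -, u, hu, hzu⟩
    rw [Sym2.eq_swap, isSeparatingForest_insert_edge_iff hpz.symm he'
      (Finset.mem_union_left _ hu) hzu hp] at hF
    exact ⟨hF, u, hu, hzu⟩
  · rintro ⟨hF, u, hu, hzu⟩
    rw [← isSeparatingForest_insert_edge_iff hpz.symm he' (Finset.mem_union_left _ hu) hzu hp,
      Sym2.eq_swap] at hF
    exact ⟨⟨hF, u, hu, hadj.reachable.trans (hzu.mono (fromEdgeSet_mono (by simp)))⟩,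
      hadj, u, hu, hzu⟩

theorem sepForestSum_eq_add_mul {B : Finset (Sym2 V)} {S : Finset V} {t w : V}
    (he : s(t, w) ∈ B) (ht : t ∈ S) (hw : w ∉ S) :
    sepForestSum x B S = sepForestSum x (B.erase s(t, w)) S +
      x * sepForestSum x (B.erase s(t, w)) (insert w S) :=
  sum_pow_card_eq_add_mul x he fun F hF =>
    isSeparatingForest_insert_edge_iff (fun h => hw (h ▸ ht)) (fun h => by simpa using hF h) ht
      .rfl hw

theorem sepForestSum_erase_of_mem {B : Finset (Sym2 V)} {S : Finset V} {a b : V}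
    (he : s(a, b) ∈ B) (ha : a ∈ S) (hb : b ∈ S) (hab : a ≠ b) :
    sepForestSum x B S = sepForestSum x (B.erase s(a, b)) S := by
  have hPQ : ∀ F ⊆ B.erase s(a, b), IsSeparatingForest S (insert s(a, b) F) ↔ False :=
    fun F _ => iff_false_intro fun hF =>
      hF.2 ha hb hab (Adj.reachable (by simp [hab]))
  simp [sepForestSum, sum_pow_card_eq_add_mul x he hPQ]

theorem sepForestSum_eq_add_linked {B : Finset (Sym2 V)} {S : Finset V} {p : V} (hp : p ∉ S) :
    sepForestSum x B S = sepForestSum x B (insert p S) + linkedForestSum x B S ∅ p := by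
  rw [sepForestSum, ← Finset.sum_filter_not_add_sum_filter _
    fun F => ∃ u ∈ S, (𝒢 F).Reachable p u, Finset.filter_filter, Finset.filter_filter]
  congr 1 <;> refine Finset.sum_congr (Finset.filter_congr fun F _ => ?_) fun _ _ => rfl
  · simp [isSeparatingForest_insert_iff hp]
  · simp [IsLinkedForest]

theorem linkedForestSum_eq_mul_sum [Fintype V] {B : Finset (Sym2 V)} {U W : Finset V} {p : V}
    (hp : p ∉ U ∪ W) :
    linkedForestSum x B U W p =
      x * ∑ z ∈ (𝒢 B).neighborFinset p, linkedForestSum x (B.erase s(p, z)) U (insert p W) z := by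
  have hpU : p ∉ U := fun h => hp (Finset.mem_union_left _ h)
  calc linkedForestSum x B U W p
      = ∑ F ∈ B.powerset with IsLinkedForest U W p F,
          ∑ z ∈ (𝒢 B).neighborFinset p, if IsFirstStep U F p z then x ^ #F else 0 := by
        refine Finset.sum_congr rfl fun F hF => ?_
        obtain ⟨hFB, hF, u, hu, hpu⟩ := by simpa using hF
        obtain ⟨z, hz⟩ := exists_isFirstStep hu hpU hpu
        have hzB : z ∈ (𝒢 B).neighborFinset p := by
          simpa using (fromEdgeSet_mono (Finset.coe_subset.mpr hFB) hz.1 : (𝒢 B).Adj p z)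
        rw [Finset.sum_eq_single_of_mem z hzB fun z' _ hz' => if_neg fun h =>
          hz' (h.unique (hF.mono Finset.subset_union_left) hz), if_pos hz]
    _ = ∑ z ∈ (𝒢 B).neighborFinset p,
          ∑ F ∈ B.powerset with IsLinkedForest U W p F ∧ IsFirstStep U F p z, x ^ #F := by
        rw [Finset.sum_comm]
        simp only [← Finset.sum_filter, Finset.filter_filter]
    _ = _ := by
        rw [Finset.mul_sum]
        refine Finset.sum_congr rfl fun z hz => ?_
        have hpz : (𝒢 B).Adj p z := by simpa using hz
        have he : s(p, z) ∈ B := ((fromEdgeSet_adj _).mp hpz).1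
        have hzero : ∑ F ∈ (B.erase s(p, z)).powerset with
            IsLinkedForest U W p F ∧ IsFirstStep U F p z, x ^ #F = 0 := by
          refine Finset.sum_eq_zero fun F hF => absurd ?_ (Finset.notMem_erase s(p, z) B)
          rw [Finset.mem_filter, Finset.mem_powerset] at hF
          exact hF.1 ((fromEdgeSet_adj _).mp hF.2.2.1).1
        rw [sum_pow_card_eq_add_mul x he fun F hF => isLinkedForest_insert_iff hp hpz.ne
          fun h => by simpa using hF h, hzero, zero_add, linkedForestSum]

theorem linkedForestSum_of_mem_left {B : Finset (Sym2 V)} {U W : Finset V} {z : V} (hz : z ∈ U) :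
    linkedForestSum x B U W z = sepForestSum x B (U ∪ W) :=
  Finset.sum_congr (Finset.filter_congr fun _ _ => and_iff_left ⟨z, hz, .rfl⟩) fun _ _ => rfl

theorem linkedForestSum_of_mem_right {B : Finset (Sym2 V)} {U W : Finset V} {z : V} (hzW : z ∈ W)
    (hzU : z ∉ U) : linkedForestSum x B U W z = 0 := by
  refine Finset.sum_eq_zero fun F hF => ?_
  obtain ⟨-, hF, u, hu, hzu⟩ := Finset.mem_filter.mp hF
  exact absurd hzu (hF.2 (Finset.mem_union_right _ hzW) (Finset.mem_union_left _ hu)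
    fun h => hzU (h ▸ hu))

theorem sepForestSum_insert_of_isIsolated {B : Finset (Sym2 V)} {S : Finset V} {a : V}
    (ha : a ∉ S) (hS : ∀ v ∈ S, (𝒢 B).IsIsolated v) :
    sepForestSum x B (insert a S) = sepForestSum x B S := by
  refine Finset.sum_congr (Finset.filter_congr fun F hF => ?_) fun _ _ => rfl
  rw [isSeparatingForest_insert_iff ha, and_iff_left_iff_imp]
  refine fun _ u hu hau => ha ?_
  have hu' : (𝒢 F).IsIsolated u := fun w h =>
    hS u hu w (fromEdgeSet_mono (Finset.coe_subset.mpr (Finset.mem_powerset.mp hF)) h)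
  exact IsIsolated.eq_of_reachable hu' hau.symm ▸ hu

end Identities

section Bounds

variable {V : Type*} [DecidableEq V] {K : Type*} [NormedField K] {x : K} {Δ : ℕ}

variable (x) in
lemma norm_linkedForestSum_le_of_mem {B : Finset (Sym2 V)} {U W : Finset V} {z : V}
    (hz : z ∈ U ∪ W) : ‖linkedForestSum x B U W z‖ ≤ ‖sepForestSum x B (U ∪ W)‖ := by
  by_cases hzU : z ∈ U
  · rw [linkedForestSum_of_mem_left x hzU]
  · rw [linkedForestSum_of_mem_right x ((Finset.mem_union.mp hz).resolve_left hzU) hzU, norm_zero]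
    exact norm_nonneg _

lemma norm_sepForestSum_erase_le {B : Finset (Sym2 V)} {S : Finset V} {t w : V} {c : ℝ}
    (he : s(t, w) ∈ B) (ht : t ∈ S) (hw : w ∉ S)
    (hC : ‖linkedForestSum x (B.erase s(t, w)) S ∅ w‖ ≤ c * ‖sepForestSum x (B.erase s(t, w)) S‖) :
    (1 - (1 + c) * ‖x‖) * ‖sepForestSum x (B.erase s(t, w)) S‖ ≤ ‖sepForestSum x B S‖ := by
  set Z := sepForestSum x (B.erase s(t, w)) S
  set Zw := sepForestSum x (B.erase s(t, w)) (insert w S)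
  have hZw : ‖Zw‖ ≤ (1 + c) * ‖Z‖ := by
    have := norm_le_add_norm_add Zw (linkedForestSum x (B.erase s(t, w)) S ∅ w)
    rw [← sepForestSum_eq_add_linked x hw] at this
    linarith
  calc (1 - (1 + c) * ‖x‖) * ‖Z‖ = ‖Z‖ - ‖x‖ * ((1 + c) * ‖Z‖) := by ring
    _ ≤ ‖Z‖ - ‖x * Zw‖ := by rw [norm_mul]; gcongr
    _ ≤ ‖sepForestSum x B S‖ := by
      rw [sepForestSum_eq_add_mul x he ht hw]; exact norm_sub_le_norm_add _ _

variable [Fintype V]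

lemma degree_erase_le (B : Finset (Sym2 V)) (e : Sym2 V) (w : V) :
    (𝒢 (B.erase e)).degree w ≤ (𝒢 B).degree w :=
  degree_le_of_le (fromEdgeSet_mono (Finset.coe_subset.mpr (Finset.erase_subset e B)))

lemma degree_erase_lt {B : Finset (Sym2 V)} {p z : V} (h : (𝒢 B).Adj p z) :
    (𝒢 (B.erase s(p, z))).degree z < (𝒢 B).degree z := by
  simp_rw [← card_neighborFinset_eq_degree]
  refine Finset.card_lt_card ⟨fun w hw => ?_, fun hsub => ?_⟩
  · simp only [mem_neighborFinset, fromEdgeSet_adj, Finset.coe_erase, Set.mem_sdiff] at hw ⊢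
    exact ⟨hw.1.1, hw.2⟩
  · have := hsub (mem_neighborFinset _ _ _ |>.mpr h.symm)
    simp at this
    tauto

def LinkedSumBound (Δ : ℕ) (x : K) (B : Finset (Sym2 V)) : Prop :=
  ∀ (U W : Finset V) (p : V), p ∉ U ∪ W → (∀ w ∉ insert p (U ∪ W), (𝒢 B).degree w ≤ Δ) →
    (𝒢 B).degree p < Δ → ‖linkedForestSum x B U W p‖ ≤ ‖sepForestSum x B (U ∪ W)‖

lemma norm_linkedForestSum_erase_le (hx : 2 * ‖x‖ ≤ 1) {B : Finset (Sym2 V)} {U W : Finset V}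
    {p z : V} (hdeg : ∀ w ∉ insert p (U ∪ W), (𝒢 B).degree w ≤ Δ) (hpz : (𝒢 B).Adj p z)
    (ih : LinkedSumBound Δ x (B.erase s(p, z))) :
    (1 - 2 * ‖x‖) * ‖linkedForestSum x (B.erase s(p, z)) U (insert p W) z‖ ≤
      ‖sepForestSum x B (insert p (U ∪ W))‖ := by
  set H := insert p (U ∪ W)
  have hH : U ∪ insert p W = H := Finset.union_insert p U W
  have hdeg' : ∀ w ∉ H, (𝒢 (B.erase s(p, z))).degree w ≤ Δ := fun w hw =>
    (degree_erase_le B _ w).trans (hdeg w hw)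
  have hdz (hz : z ∉ H) : (𝒢 (B.erase s(p, z))).degree z < Δ :=
    (degree_erase_lt hpz).trans_le (hdeg z hz)
  have hC : ‖linkedForestSum x (B.erase s(p, z)) U (insert p W) z‖ ≤
      ‖sepForestSum x (B.erase s(p, z)) H‖ := by
    rw [← hH]
    by_cases hz : z ∈ U ∪ insert p W
    · exact norm_linkedForestSum_le_of_mem x hz
    · refine ih U (insert p W) z hz (fun w hw => hdeg' w ?_) (hdz (hH ▸ hz))
      exact hH ▸ fun h => hw (Finset.mem_insert_of_mem h)
  have hZ : (1 - 2 * ‖x‖) * ‖sepForestSum x (B.erase s(p, z)) H‖ ≤ ‖sepForestSum x B H‖ := by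
    have he : s(p, z) ∈ B := ((fromEdgeSet_adj _).mp hpz).1
    by_cases hz : z ∈ H
    · rw [← sepForestSum_erase_of_mem x he (Finset.mem_insert_self p _) hz hpz.ne]
      exact mul_le_of_le_one_left (norm_nonneg _) (by linarith [norm_nonneg x])
    · have := ih H ∅ z (by simpa using hz) (fun w hw => hdeg' w (by simp_all)) (hdz hz)
      rw [Finset.union_empty, ← one_mul ‖sepForestSum x _ H‖] at this
      convert norm_sepForestSum_erase_le he (Finset.mem_insert_self p _) hz this using 2
      ring
  exact (mul_le_mul_of_nonneg_left hC (by linarith)).trans hZ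

lemma two_mul_norm_linkedForestSum_le (hx : 2 * Δ * ‖x‖ ≤ 1) {B : Finset (Sym2 V)}
    {U W : Finset V} {p : V} (hp : p ∉ U ∪ W) (hdeg : ∀ w ∉ insert p (U ∪ W), (𝒢 B).degree w ≤ Δ)
    (hdp : (𝒢 B).degree p < Δ)
    (ih : ∀ z ∈ (𝒢 B).neighborFinset p, LinkedSumBound Δ x (B.erase s(p, z))) :
    2 * ‖linkedForestSum x B U W p‖ ≤ ‖sepForestSum x B (insert p (U ∪ W))‖ := by
  rw [linkedForestSum_eq_mul_sum x hp]
  set N := (𝒢 B).neighborFinset p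
  set Z := ‖sepForestSum x B (insert p (U ∪ W))‖
  rcases N.eq_empty_or_nonempty with hN | hN
  · rw [hN, Finset.sum_empty, mul_zero, norm_zero, mul_zero]
    exact norm_nonneg _
  have hcard : (N.card : ℝ) + 1 ≤ Δ := by
    rw [card_neighborFinset_eq_degree]; exact_mod_cast hdp
  have hs : 0 < 1 - 2 * ‖x‖ := by
    have := hN.card_pos
    have : (2 : ℝ) ≤ Δ := by linarith [(Nat.one_le_cast (α := ℝ)).mpr this]
    nlinarith [norm_nonneg x]
  refine le_of_mul_le_mul_left ?_ hs
  calc (1 - 2 * ‖x‖) * (2 * ‖x * ∑ z ∈ N, linkedForestSum x (B.erase s(p, z)) U (insert p W) z‖)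
      = 2 * ‖x‖ * ((1 - 2 * ‖x‖) *
          ‖∑ z ∈ N, linkedForestSum x (B.erase s(p, z)) U (insert p W) z‖) := by
        rw [norm_mul]; ring
    _ ≤ 2 * ‖x‖ * ∑ z ∈ N,
          (1 - 2 * ‖x‖) * ‖linkedForestSum x (B.erase s(p, z)) U (insert p W) z‖ := by
        rw [← Finset.mul_sum]; gcongr; exact norm_sum_le _ _
    _ ≤ 2 * ‖x‖ * ∑ z ∈ N, Z := by
        gcongr with z hz
        exact norm_linkedForestSum_erase_le (by linarith) hdeg ((mem_neighborFinset _ _ _).mp hz)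
          (ih z hz)
    _ = 2 * ‖x‖ * N.card * Z := by rw [Finset.sum_const, nsmul_eq_mul]; ring
    _ ≤ (1 - 2 * ‖x‖) * Z := by gcongr; nlinarith [norm_nonneg x]

theorem linkedSumBound (hx : 2 * Δ * ‖x‖ ≤ 1) (B : Finset (Sym2 V)) : LinkedSumBound Δ x B := by
  induction B using Finset.strongInduction with
  | H B ih =>
  intro U W p hp hdeg hdp
  have ih' : ∀ z ∈ (𝒢 B).neighborFinset p, LinkedSumBound Δ x (B.erase s(p, z)) := fun z hz =>
    ih _ (Finset.erase_ssubset ((fromEdgeSet_adj _).mp ((mem_neighborFinset _ _ _).mp hz)).1)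
  have hlink := two_mul_norm_linkedForestSum_le hx hp hdeg hdp ih'
  have hgrow := two_mul_norm_linkedForestSum_le (U := U ∪ W) (W := ∅) hx (by simpa using hp)
    (by simpa using hdeg) hdp ih'
  rw [Finset.union_empty] at hgrow
  have := norm_le_add_norm_add (sepForestSum x B (insert p (U ∪ W)))
    (linkedForestSum x B (U ∪ W) ∅ p)
  rw [← sepForestSum_eq_add_linked x hp] at this
  linarith

lemma sepForestSum_ne_zero_of_adj (hx : 2 * Δ * ‖x‖ ≤ 1) {B : Finset (Sym2 V)} {S : Finset V}
    {t w : V} (hdeg : ∀ v ∉ S, (𝒢 B).degree v ≤ Δ) (ht : t ∈ S) (hw : w ∉ S)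
    (hadj : (𝒢 B).Adj t w) (h : sepForestSum x (B.erase s(t, w)) S ≠ 0) :
    sepForestSum x B S ≠ 0 := by
  set B' := B.erase s(t, w)
  have hdw : (𝒢 B').degree w < Δ := (degree_erase_lt hadj).trans_le (hdeg w hw)
  obtain ⟨c, hC, hc⟩ : ∃ c : ℝ, ‖linkedForestSum x B' S ∅ w‖ ≤ c * ‖sepForestSum x B' S‖ ∧
      (1 + c) * ‖x‖ < 1 := by
    -- If `w` is isolated in `B'` the linked sum is empty; otherwise `w` had degree at least 2.
    have hΔ : (1 : ℝ) ≤ Δ := by exact_mod_cast Nat.one_le_of_lt hdw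
    by_cases hiso : (𝒢 B').degree w = 0
    · refine ⟨0, ?_, by nlinarith [norm_nonneg x]⟩
      rw [linkedForestSum_eq_mul_sum x (by simpa using hw), card_eq_zero.mp
        ((card_neighborFinset_eq_degree _ _).trans hiso)]
      simp
    · refine ⟨1, ?_, ?_⟩
      · simpa using linkedSumBound hx B' S ∅ w (by simpa using hw)
          (fun v hv => (degree_erase_le B _ v).trans (hdeg v (by simp_all))) hdw
      · have : (2 : ℝ) ≤ Δ := by exact_mod_cast (Nat.one_le_iff_ne_zero.mpr hiso).trans_lt hdw
        nlinarith [norm_nonneg x]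
  have hZ := norm_sepForestSum_erase_le ((fromEdgeSet_adj _).mp hadj).1 ht hw hC
  have hpos : 0 < (1 - (1 + c) * ‖x‖) * ‖sepForestSum x B' S‖ :=
    mul_pos (by linarith) (norm_pos_iff.mpr h)
  exact norm_pos_iff.mp (hpos.trans_le hZ)

theorem sepForestSum_ne_zero (hx : 2 * Δ * ‖x‖ ≤ 1) {B : Finset (Sym2 V)}
    (hB : ∀ e ∈ B, ¬e.IsDiag) {S : Finset V} (hdeg : ∀ w ∉ S, (𝒢 B).degree w ≤ Δ) :
    sepForestSum x B S ≠ 0 := by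
  induction B using Finset.strongInduction generalizing S with
  | H B ih =>
  have ih' {t w : V} (hadj : (𝒢 B).Adj t w) (S : Finset V)
      (hS : ∀ v ∉ S, (𝒢 B).degree v ≤ Δ) : sepForestSum x (B.erase s(t, w)) S ≠ 0 :=
    ih _ (Finset.erase_ssubset ((fromEdgeSet_adj _).mp hadj).1)
      (fun e he => hB e (Finset.mem_of_mem_erase he)) fun v hv =>
        (degree_erase_le B _ v).trans (hS v hv)
  by_cases hbd : ∃ t ∈ S, ∃ w ∉ S, (𝒢 B).Adj t w
  · obtain ⟨t, ht, w, hw, hadj⟩ := hbd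
    exact sepForestSum_ne_zero_of_adj hx hdeg ht hw hadj (ih' hadj S hdeg)
  by_cases hint : ∃ a ∈ S, ∃ b ∈ S, (𝒢 B).Adj a b
  · obtain ⟨a, ha, b, hb, hadj⟩ := hint
    rw [sepForestSum_erase_of_mem x ((fromEdgeSet_adj _).mp hadj).1 ha hb hadj.ne]
    exact ih' hadj S hdeg
  have hiso : ∀ v ∈ S, (𝒢 B).IsIsolated v := fun v hv w hvw => by
    by_cases hw : w ∈ S
    exacts [hint ⟨v, hv, w, hw, hvw⟩, hbd ⟨v, hv, w, hw, hvw⟩]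
  by_cases hedge : ∃ a b, (𝒢 B).Adj a b
  · obtain ⟨a, b, hadj⟩ := hedge
    have ha : a ∉ S := fun h => hiso a h b hadj
    have hb : b ∉ insert a S := by
      simp only [Finset.mem_insert, not_or]
      exact ⟨hadj.ne.symm, fun h => hiso b h a hadj.symm⟩
    have hdeg' : ∀ v ∉ insert a S, (𝒢 B).degree v ≤ Δ := fun v hv =>
      hdeg v fun h => hv (Finset.mem_insert_of_mem h)
    rw [← sepForestSum_insert_of_isIsolated x ha hiso]
    exact sepForestSum_ne_zero_of_adj hx hdeg' (Finset.mem_insert_self a S) hb hadj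
      (ih' hadj _ hdeg')
  · have hB0 : B = ∅ := Finset.eq_empty_of_forall_notMem fun e he => by
      induction e using Sym2.ind with
      | h a b => exact hedge ⟨a, b, by simpa using ⟨he, hB _ he⟩⟩
    rw [hB0, sepForestSum_empty]
    exact one_ne_zero

end Bounds

end ForestSum

/-- Theorem 1.3: if all vertices of `G`, except possibly `v`, have degree at most `Δ`,
then `Z_G(x) ≠ 0` whenever `|x| ≤ 1/(2Δ)`. -/
theorem forestSum_ne_zero (G : SimpleGraph V) (v : V) (Δ : ℕ)
    (hdeg : ∀ w : V, w ≠ v → G.degree w ≤ Δ)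
    (x : ℂ) (hx : ‖x‖ ≤ 1 / (2 * Δ)) :
    forestSum G x ≠ 0 := by
  have hx' : 2 * Δ * ‖x‖ ≤ 1 := by
    rcases Nat.eq_zero_or_pos Δ with rfl | hΔ
    · simp
    · rwa [le_div_iff₀ (by positivity), mul_comm] at hx
  have hforest : forestSum G x = ForestSum.sepForestSum x G.edgeFinset {v} := by
    simp [forestSum, ForestSum.sepForestSum, ForestSum.IsSeparatingForest]
  rw [hforest]
  refine ForestSum.sepForestSum_ne_zero hx'
    (fun e he => G.not_isDiag_of_mem_edgeSet (mem_edgeFinset.mp he)) fun w hw => ?_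
  convert hdeg w (by simpa using hw)
  simp
end
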